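/- arXiv:2503.02694 — 8 statements merged into one kernel-verified Lean document; each statement's English description precedes it below -/
import Mathlib

section
/- Let (D, λ) be a temporal digraph and let x, y be distinct vertices of D. If there exist a temporal x,y-path and a temporal y,x-path in (D, λ), then some cycle of D is a weak-cycle of (D, λ). -/
/-- A temporal walk skeleton with `q` arcs: vertices `v 0, …, v q` and times
`t 0, …, t (q-1)` (so `t i` is the time used on the arc from `v i` to `v (i+1)`). -/
structure TWalk (V : Type*) where
  q : ℕ
  v : Fin (q + 1) → V
  t : Fin q → ℕ

namespace TWalk

variable {V : Type*}

/-- The first vertex of a walk. -/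
def first (W : TWalk V) : V := W.v 0

/-- The last vertex of a walk. -/
def last (W : TWalk V) : V := W.v (Fin.last W.q)

/-- The arrival time (i.e. the last time) of a walk. -/
def arrival (W : TWalk V) : ℕ :=
  if h : 0 < W.q then W.t ⟨W.q - 1, by omega⟩ else 0

/-- `W` is a (non-strict) temporal walk in the temporal digraph `(D, lam)`:
it has at least one arc, consecutive vertices are joined by arcs of `D`, each
time belongs to the time set of the corresponding arc, and the times are
non-decreasing. -/
def IsWalk (D : V → V → Prop) (lam : V → V → Finset ℕ) (W : TWalk V) : Prop :=
  1 ≤ W.q ∧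
  (∀ i : Fin W.q,
      D (W.v i.castSucc) (W.v i.succ) ∧ W.t i ∈ lam (W.v i.castSucc) (W.v i.succ)) ∧
  ∀ i j : Fin W.q, i ≤ j → W.t i ≤ W.t j

/-- `W` is a strict temporal walk in the temporal digraph `(D, lam)`:
as `IsWalk` but with strictly increasing times. -/
def IsStrictWalk (D : V → V → Prop) (lam : V → V → Finset ℕ) (W : TWalk V) : Prop :=
  1 ≤ W.q ∧
  (∀ i : Fin W.q,
      D (W.v i.castSucc) (W.v i.succ) ∧ W.t i ∈ lam (W.v i.castSucc) (W.v i.succ)) ∧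
  ∀ i j : Fin W.q, i < j → W.t i < W.t j

/-- The set of arcs used by a walk. -/
def arcs (W : TWalk V) : Set (V × V) :=
  {p | ∃ i : Fin W.q, p = (W.v i.castSucc, W.v i.succ)}

/-- The set of temporal arcs (arc-time pairs) used by a walk. -/
def tarcs (W : TWalk V) : Set ((V × V) × ℕ) :=
  {p | ∃ i : Fin W.q, p = ((W.v i.castSucc, W.v i.succ), W.t i)}

/-- `W` is a temporal `x,y`-path: a temporal walk from `x` to `y` with all of its
vertices pairwise distinct. -/
def IsPath (D : V → V → Prop) (lam : V → V → Finset ℕ) (x y : V) (W : TWalk V) : Prop :=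
  W.IsWalk D lam ∧ W.first = x ∧ W.last = y ∧ Function.Injective W.v

/-- `W` is a temporal `x,x`-path: a closed temporal walk at `x` whose first `q`
vertices are pairwise distinct. -/
def IsClosedPath (D : V → V → Prop) (lam : V → V → Finset ℕ) (x : V) (W : TWalk V) : Prop :=
  W.IsWalk D lam ∧ W.first = x ∧ W.last = x ∧
    Function.Injective fun i : Fin W.q => W.v i.castSucc

/-- `W` is a strict temporal `x,x`-path. -/
def IsStrictClosedPath (D : V → V → Prop) (lam : V → V → Finset ℕ) (x : V)
    (W : TWalk V) : Prop :=
  W.IsStrictWalk D lam ∧ W.first = x ∧ W.last = x ∧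
    Function.Injective fun i : Fin W.q => W.v i.castSucc

end TWalk

/-- A cycle skeleton on `q` vertices. -/
structure DiCycle (V : Type*) where
  q : ℕ
  v : Fin q → V

namespace DiCycle

variable {V : Type*}

/-- The cyclic successor of an index. -/
def next (C : DiCycle V) (i : Fin C.q) : Fin C.q :=
  ⟨(i.val + 1) % C.q, Nat.mod_lt _ i.pos⟩

/-- `C` is a cycle of the digraph `D`: it has at least two pairwise distinct
vertices and consecutive vertices (cyclically) are joined by arcs of `D`. -/
def IsCycle (D : V → V → Prop) (C : DiCycle V) : Prop :=
  2 ≤ C.q ∧ Function.Injective C.v ∧ ∀ i : Fin C.q, D (C.v i) (C.v (C.next i))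

/-- The vertex set of a cycle. -/
def vertices (C : DiCycle V) : Set V := Set.range C.v

/-- The arc set of a cycle. -/
def arcs (C : DiCycle V) : Set (V × V) :=
  {p | ∃ i : Fin C.q, p = (C.v i, C.v (C.next i))}

end DiCycle

variable {V : Type*}

/-- `(D, lam)` is a temporal digraph: `D` is loopless and `lam` assigns a
nonempty finite set of times to every arc. -/
def IsTemporalDigraph (D : V → V → Prop) (lam : V → V → Finset ℕ) : Prop :=
  (∀ u, ¬ D u u) ∧ ∀ u w, D u w → (lam u w).Nonempty

/-- `C` is a simple-cycle of `(D, lam)`: some vertex of `C` admits a temporal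
`x,x`-path using exactly the arcs of `C`. -/
def IsSimpleCycle (D : V → V → Prop) (lam : V → V → Finset ℕ) (C : DiCycle V) : Prop :=
  ∃ x ∈ C.vertices, ∃ P : TWalk V, P.IsClosedPath D lam x ∧ P.arcs = C.arcs

/-- `C` is a weak-cycle of `(D, lam)`: there are distinct vertices `x, y` of `C`,
a temporal `x,y`-path and a temporal `y,x`-path whose arc sets union to the arcs
of `C`. -/
def IsWeakCycle (D : V → V → Prop) (lam : V → V → Finset ℕ) (C : DiCycle V) : Prop :=
  ∃ x ∈ C.vertices, ∃ y ∈ C.vertices, x ≠ y ∧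
    ∃ P P' : TWalk V, P.IsPath D lam x y ∧ P'.IsPath D lam y x ∧
      P.arcs ∪ P'.arcs = C.arcs

/-- `C` is a strong-cycle of `(D, lam)`: every vertex of `C` admits a temporal
`x,x`-path using exactly the arcs of `C`. -/
def IsStrongCycle (D : V → V → Prop) (lam : V → V → Finset ℕ) (C : DiCycle V) : Prop :=
  ∀ x ∈ C.vertices, ∃ P : TWalk V, P.IsClosedPath D lam x ∧ P.arcs = C.arcs

/-! Induct on the total length of the two paths. If they meet only in `x` and `y`, their
concatenation traces a cycle of `D`, and the two paths themselves witness that it is a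
weak-cycle. Otherwise a common vertex `w ∉ {x, y}` cuts off a `y,w`-path (a prefix of `P'`) and a
`w,y`-path (a suffix of `P`) of smaller total length. -/

namespace TWalk

variable {D : V → V → Prop} {lam : V → V → Finset ℕ} {x y : V}

theorem IsWalk.adj_of_mem_arcs {W : TWalk V} (hW : W.IsWalk D lam) {p : V × V}
    (hp : p ∈ W.arcs) : D p.1 p.2 := by
  obtain ⟨i, rfl⟩ := hp
  exact (hW.2.1 i).1

theorem IsPath.ne {W : TWalk V} (hW : W.IsPath D lam x y) : x ≠ y := by
  obtain ⟨⟨hq, -⟩, rfl, rfl, hinj⟩ := hW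
  intro h
  have := congrArg Fin.val (hinj h)
  simp only [Fin.val_zero, Fin.val_last] at this
  omega

def sub (W : TWalk V) (a b : ℕ) (hab : a ≤ b) (hb : b ≤ W.q) : TWalk V where
  q := b - a
  v i := W.v ⟨a + i, by omega⟩
  t i := W.t ⟨a + i, by omega⟩

theorem IsPath.sub {W : TWalk V} (hW : W.IsPath D lam x y) {a b : ℕ} (hab : a < b)
    (hb : b ≤ W.q) :
    (W.sub a b hab.le hb).IsPath D lam (W.v ⟨a, by omega⟩) (W.v ⟨b, by omega⟩) := by
  obtain ⟨⟨-, harc, hmono⟩, -, -, hinj⟩ := hW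
  refine ⟨⟨Nat.le_sub_of_add_le' hab,
    fun i => harc ⟨a + i, by have : (i : ℕ) < b - a := i.isLt; omega⟩,
    fun i j hij => hmono _ _ (Fin.mk_le_mk.2 (by have := Fin.le_def.1 hij; omega))⟩,
    congrArg W.v (Fin.ext (by simp)),
    congrArg W.v (Fin.ext (by simp only [Fin.val_last]; show a + (b - a) = b; omega)),
    fun i j h => Fin.ext ?_⟩
  have := congrArg Fin.val (hinj h)
  simp only at this
  omega

/-- Concatenation of `W` and `W'`, meant for `W.last = W'.first`: position `W.q` is read
off `W`. -/
def append (W W' : TWalk V) : TWalk V where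
  q := W.q + W'.q
  v i := if h : i.val ≤ W.q then W.v ⟨i, by omega⟩ else W'.v ⟨i - W.q, by omega⟩
  t i := if h : i.val < W.q then W.t ⟨i, h⟩ else W'.t ⟨i - W.q, by omega⟩

section Append

variable {W W' : TWalk V}

theorem append_v_of_le (i : Fin ((W.append W').q + 1)) (h : i.val ≤ W.q) :
    (W.append W').v i = W.v ⟨i, Nat.lt_succ_of_le h⟩ :=
  dif_pos h

theorem append_v_of_ge (hW : W.last = W'.first) (i : Fin ((W.append W').q + 1))
    (h : W.q ≤ i.val) :
    (W.append W').v i =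
      W'.v ⟨i - W.q, by have : (i : ℕ) < W.q + W'.q + 1 := i.isLt; omega⟩ := by
  by_cases hi : i.val ≤ W.q
  · have hiq : i.val = W.q := le_antisymm hi h
    rw [append_v_of_le i hi]
    exact (congrArg W.v (Fin.ext hiq)).trans
      (hW.trans (congrArg W'.v (Fin.ext (by simp [hiq]))))
  · exact dif_neg hi

theorem arcs_append (hW : W.last = W'.first) : (W.append W').arcs = W.arcs ∪ W'.arcs := by
  ext p
  constructor
  · rintro ⟨i, rfl⟩
    have hi : (i : ℕ) < W.q + W'.q := i.isLt
    by_cases h : (i : ℕ) < W.q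
    · refine Or.inl ⟨⟨i, h⟩, ?_⟩
      rw [append_v_of_le _ (by simp; omega), append_v_of_le _ (by simp; omega)]
      rfl
    · refine Or.inr ⟨⟨i - W.q, by omega⟩, ?_⟩
      rw [append_v_of_ge hW _ (by simp; omega), append_v_of_ge hW _ (by simp; omega)]
      exact Prod.ext (congrArg W'.v (Fin.ext rfl)) (congrArg W'.v (Fin.ext (by simp; omega)))
  · rintro (⟨i, rfl⟩ | ⟨i, rfl⟩)
    · refine ⟨⟨i, by have := i.isLt; show (i : ℕ) < W.q + W'.q; omega⟩, ?_⟩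
      rw [append_v_of_le _ (by simp), append_v_of_le _ (by simp)]
      rfl
    · refine ⟨⟨W.q + i, by have := i.isLt; show W.q + i < W.q + W'.q; omega⟩, ?_⟩
      rw [append_v_of_ge hW _ (by simp), append_v_of_ge hW _ (by simp; omega)]
      exact Prod.ext (congrArg W'.v (Fin.ext (by simp)))
        (congrArg W'.v (Fin.ext (by simp; omega)))

end Append

/-- The cycle traced by a closed walk `W`, dropping its repeated last vertex. -/
def toCycle (W : TWalk V) : DiCycle V := ⟨W.q, fun i => W.v i.castSucc⟩

theorem toCycle_v_next {W : TWalk V} (hW : W.last = W.first) (i : Fin W.toCycle.q) :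
    W.toCycle.v (W.toCycle.next i) = W.v i.succ := by
  have hi : (i : ℕ) < W.q := i.isLt
  by_cases h : (i : ℕ) + 1 < W.q
  · have hn : (W.toCycle.next i : ℕ) = i + 1 := Nat.mod_eq_of_lt h
    exact congrArg W.v (Fin.ext ((Fin.val_castSucc _).trans hn))
  · have hlast : i.succ = Fin.last W.q := Fin.ext (by simp; omega)
    rw [hlast, ← last, hW]
    exact congrArg W.v
      (Fin.ext (by simp [DiCycle.next, toCycle, show (i : ℕ) + 1 = W.q by omega]))

theorem arcs_toCycle {W : TWalk V} (hW : W.last = W.first) : W.toCycle.arcs = W.arcs := by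
  ext p
  simp only [DiCycle.arcs, arcs, Set.mem_ofPred_eq, toCycle_v_next hW]
  rfl

theorem isCycle_toCycle {W : TWalk V} (hW : W.last = W.first) (hq : 2 ≤ W.q)
    (hinj : Function.Injective fun i : Fin W.q => W.v i.castSucc)
    (hD : ∀ p ∈ W.arcs, D p.1 p.2) : W.toCycle.IsCycle D :=
  ⟨hq, hinj, fun i => by
    rw [toCycle_v_next hW]
    exact hD _ ⟨i, rfl⟩⟩

end TWalk

section WeakCycle

variable {D : V → V → Prop} {lam : V → V → Finset ℕ} {x y : V} {P P' : TWalk V}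

open TWalk

theorem TWalk.IsPath.v_ne_of_inter_subset (hP : P.IsPath D lam x y) (hP' : P'.IsPath D lam y x)
    (hsep : Set.range P.v ∩ Set.range P'.v ⊆ {x, y}) {a : Fin (P.q + 1)} {c : Fin (P'.q + 1)}
    (ha : a ≠ Fin.last P.q) (hc : c ≠ Fin.last P'.q) : P.v a ≠ P'.v c := by
  intro h
  rcases hsep ⟨⟨a, rfl⟩, c, h.symm⟩ with hx | hy
  · exact hc (hP'.2.2.2 (h.symm.trans (hx.trans hP'.2.2.1.symm)))
  · exact ha (hP.2.2.2 (hy.trans hP.2.2.1.symm))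

theorem TWalk.IsPath.injective_append (hP : P.IsPath D lam x y) (hP' : P'.IsPath D lam y x)
    (hsep : Set.range P.v ∩ Set.range P'.v ⊆ {x, y}) :
    Function.Injective fun i : Fin (P.append P').q => (P.append P').v i.castSucc := by
  have hyy : P.last = P'.first := hP.2.2.1.trans hP'.2.1.symm
  have cross : ∀ a b : Fin (P.append P').q, (a : ℕ) < P.q → P.q ≤ (b : ℕ) →
      (P.append P').v a.castSucc ≠ (P.append P').v b.castSucc := by
    intro a b ha hb
    have hb' : (b : ℕ) < P.q + P'.q := b.isLt
    rw [append_v_of_le _ (by simp; omega), append_v_of_ge hyy _ (by simpa using hb)]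
    exact hP.v_ne_of_inter_subset hP' hsep (Fin.ne_of_val_ne (by simp; omega))
      (Fin.ne_of_val_ne (by simp; omega))
  intro i j hij
  have hi : (i : ℕ) < P.q + P'.q := i.isLt
  have hj : (j : ℕ) < P.q + P'.q := j.isLt
  rcases lt_or_ge (i : ℕ) P.q with hiP | hiP <;> rcases lt_or_ge (j : ℕ) P.q with hjP | hjP
  · simp only [append_v_of_le _ (show (i.castSucc : ℕ) ≤ P.q by simp; omega),
      append_v_of_le _ (show (j.castSucc : ℕ) ≤ P.q by simp; omega)] at hij
    exact Fin.ext (by simpa using congrArg Fin.val (hP.2.2.2 hij))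
  · exact absurd hij (cross i j hiP hjP)
  · exact absurd hij.symm (cross j i hjP hiP)
  · simp only [append_v_of_ge hyy _ (show P.q ≤ (i.castSucc : ℕ) by simpa using hiP),
      append_v_of_ge hyy _ (show P.q ≤ (j.castSucc : ℕ) by simpa using hjP)] at hij
    have := congrArg Fin.val (hP'.2.2.2 hij)
    simp only [Fin.val_castSucc] at this
    exact Fin.ext (by omega)

theorem TWalk.IsPath.isCycle_and_isWeakCycle_toCycle_append (hP : P.IsPath D lam x y)
    (hP' : P'.IsPath D lam y x) (hsep : Set.range P.v ∩ Set.range P'.v ⊆ {x, y}) :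
    (P.append P').toCycle.IsCycle D ∧ IsWeakCycle D lam (P.append P').toCycle := by
  have hyy : P.last = P'.first := hP.2.2.1.trans hP'.2.1.symm
  have hq : 1 ≤ P.q ∧ 1 ≤ P'.q := ⟨hP.1.1, hP'.1.1⟩
  have hfirst : (P.append P').first = x := (append_v_of_le 0 (Nat.zero_le _)).trans hP.2.1
  have hclosed : (P.append P').last = (P.append P').first := by
    rw [hfirst, ← hP'.2.2.1]
    exact (append_v_of_ge hyy (Fin.last (P.q + P'.q)) (Nat.le_add_right _ _)).trans
      (congrArg P'.v (Fin.ext (Nat.add_sub_cancel_left ..)))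
  refine ⟨isCycle_toCycle hclosed (by show 2 ≤ P.q + P'.q; omega)
    (hP.injective_append hP' hsep) ?_, ?_⟩
  · rw [arcs_append hyy]
    rintro p (hp | hp)
    exacts [hP.1.adj_of_mem_arcs hp, hP'.1.adj_of_mem_arcs hp]
  · refine ⟨x, ⟨⟨0, by show 0 < P.q + P'.q; omega⟩, hfirst⟩,
      y, ⟨⟨P.q, by show P.q < P.q + P'.q; omega⟩, ?_⟩, hP.ne, P, P', hP, hP',
      (arcs_toCycle hclosed).trans (arcs_append hyy) |>.symm⟩
    exact (append_v_of_le _ le_rfl).trans hP.2.2.1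

theorem exists_isWeakCycle_of_isPath (hP : P.IsPath D lam x y) (hP' : P'.IsPath D lam y x) :
    ∃ C : DiCycle V, C.IsCycle D ∧ IsWeakCycle D lam C := by
  induction hn : P.q + P'.q using Nat.strong_induction_on generalizing x y P P' with
  | _ n ih =>
  by_cases hsep : Set.range P.v ∩ Set.range P'.v ⊆ {x, y}
  · exact ⟨_, hP.isCycle_and_isWeakCycle_toCycle_append hP' hsep⟩
  obtain ⟨w, ⟨⟨i, rfl⟩, j, hj⟩, hw⟩ := Set.not_subset.1 hsep
  simp only [Set.mem_insert_iff, Set.mem_singleton_iff, not_or] at hw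
  have hi0 : (i : ℕ) ≠ 0 := fun h => hw.1 ((congrArg P.v (Fin.ext h)).trans hP.2.1)
  have hiq : (i : ℕ) ≠ P.q := fun h => hw.2 ((congrArg P.v (Fin.ext h)).trans hP.2.2.1)
  have hj0 : (j : ℕ) ≠ 0 := fun h =>
    hw.2 (hj.symm.trans ((congrArg P'.v (Fin.ext h)).trans hP'.2.1))
  have hiP : (i : ℕ) ≤ P.q := Nat.lt_succ_iff.1 i.isLt
  have hjP' : (j : ℕ) ≤ P'.q := Nat.lt_succ_iff.1 j.isLt
  have hQ := hP.sub (a := i) (b := P.q) (by omega) le_rfl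
  rw [show P.v ⟨P.q, _⟩ = P'.v ⟨0, _⟩ from hP.2.2.1.trans hP'.2.1.symm,
    show P.v ⟨i, _⟩ = P'.v ⟨j, _⟩ from hj.symm] at hQ
  exact ih _ (show (j : ℕ) - 0 + (P.q - i) < n by omega)
    (hP'.sub (a := 0) (b := j) (by omega) hjP') hQ rfl

end WeakCycle

theorem weakCycle_of_twoWayReach_general (V : Type*) (D : V → V → Prop)
    (lam : V → V → Finset ℕ)
    (x y : V)
    (P : TWalk V) (hP : P.IsPath D lam x y)
    (P' : TWalk V) (hP' : P'.IsPath D lam y x) :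
    ∃ C : DiCycle V, C.IsCycle D ∧ IsWeakCycle D lam C :=
  exists_isWeakCycle_of_isPath hP hP'

/-- If there exist a temporal `x,y`-path and a temporal `y,x`-path
in `(D, lam)` for distinct vertices `x, y`, then some cycle of `D` is a
weak-cycle of `(D, lam)`. -/
theorem weakCycle_of_twoWayReach (V : Type*) [Fintype V] (D : V → V → Prop)
    (lam : V → V → Finset ℕ) (hTD : IsTemporalDigraph D lam)
    (x y : V) (hxy : x ≠ y)
    (P : TWalk V) (hP : P.IsPath D lam x y)
    (P' : TWalk V) (hP' : P'.IsPath D lam y x) :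
    ∃ C : DiCycle V, C.IsCycle D ∧ IsWeakCycle D lam C :=
  weakCycle_of_twoWayReach_general V D lam x y P hP P' hP'
end

section
/- Let n ≥ 2 and let A be the auxiliary cycle of order n. For every vertex v of A there exists exactly one temporal v,v-path in A. Moreover, for each i with 0 ≤ i ≤ n−2, this unique temporal v_i,v_i-path is W_{v_i} = (v_i, t_i^1, v_{i+1}, t_i^2, …, v_{n−1}, t_i^{n−i}, v_0, t_i^{n−i+1}, …, t_i^n, v_i), where t_i^j = j(n−1) − i for 1 ≤ j ≤ n. -/
variable {V : Type*}

/-- The arc relation of the directed cycle on `Fin n`: there is an arc from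
`v_{i-1}` to `v_i` for each `i`, cyclically (so also from `v_{n-1}` to `v_0`). -/
def auxD (n : ℕ) : Fin n → Fin n → Prop :=
  fun u w => (u.val + 1) % n = w.val

/-- The time sets of the auxiliary cycle of order `n`, keyed by the head vertex
of the arc: `lam(e_0) = {0, n, 2n, …, (n-1)n}` on the arc into `v_0`, and
`lam(e_i) = {n-i, 2n-i, …, (n-1)n - i}` on the arc into `v_i` for `1 ≤ i ≤ n-1`. -/
def auxLam (n : ℕ) : Fin n → Fin n → Finset ℕ :=
  fun _ w =>
    if w.val = 0 then (Finset.range n).image fun k => k * n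
    else (Finset.Icc 1 (n - 1)).image fun k => k * n - w.val

/-- The temporal `v_i,v_i`-path `W_{v_i}` of the auxiliary cycle of order `n`:
it visits `v_i, v_{i+1}, …, v_{n-1}, v_0, …, v_i` and its `j`-th time
(`1`-indexed) is `t_i^j = j(n-1) - i`. -/
def auxWalk (n : ℕ) (i : Fin n) : TWalk (Fin n) where
  q := n
  v := fun j => ⟨(i.val + j.val) % n, Nat.mod_lt _ i.pos⟩
  t := fun j => (j.val + 1) * (n - 1) - i.val

/-- The underlying directed cycle `(v_0, v_1, …, v_{n-1})` of the auxiliary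
cycle of order `n`. -/
def auxCycle (n : ℕ) : DiCycle (Fin n) := ⟨n, id⟩

/-! Along a temporal path in the directed `n`-cycle the vertices are forced, and a closed path
must wind around exactly once, so it has `n` arcs. A time on the arc into `v_w` is a number
`s ≤ (n - 1) * n - w` with `s ≡ -w [MOD n]`; hence the `m`-th time of a closed path at `v_i`,
plus the unreduced index `i + m + 1` of the vertex it reaches, is a multiple of `n` in
`(0, n * n]`. As the times are nondecreasing these `n` multiples increase strictly, so they are
`n, 2n, …, n * n`, which is `t_i^{m+1} = (m + 1)(n - 1) - i`. -/

lemma Nat.mod_cases_of_lt_two_mul {x n : ℕ} (h : x < 2 * n) :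
    (x < n ∧ x % n = x) ∨ (n ≤ x ∧ x % n + n = x) := by
  rcases lt_or_ge x n with hx | hx
  · exact .inl ⟨hx, Nat.mod_eq_of_lt hx⟩
  · rw [Nat.mod_eq_sub_mod hx, Nat.mod_eq_of_lt (by omega)]
    omega

lemma StrictMono.eq_succ_mul_of_dvd {n : ℕ} {a : Fin n → ℕ} (ha : StrictMono a)
    (hdvd : ∀ m, n ∣ a m) (hpos : ∀ m, 0 < a m) (hle : ∀ m, a m ≤ n * n) (m : Fin n) :
    a m = (m + 1) * n := by
  have hquot : ∀ m, 1 ≤ a m / n ∧ a m / n ≤ n := fun m =>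
    ⟨(Nat.one_le_div_iff m.pos).2 (Nat.le_of_dvd (hpos m) (hdvd m)),
      Nat.div_le_of_le_mul (hle m)⟩
  let c : Fin n → Fin n := fun m => ⟨a m / n - 1, by have := hquot m; omega⟩
  have hc : StrictMono c := fun m m' hmm' => by
    have := Nat.div_lt_div_of_lt_of_dvd (hdvd m') (ha hmm')
    have := hquot m
    simp only [c, Fin.mk_lt_mk]
    omega
  have hcm : a m / n - 1 = m := congrArg Fin.val hc.apply_eq
  rw [← Nat.div_mul_cancel (hdvd m)]
  have := hquot m
  congr 1
  omega

lemma mem_auxLam_iff {n : ℕ} {u w : Fin n} {s : ℕ} :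
    s ∈ auxLam n u w ↔ n ∣ s + w ∧ s + w ≤ (n - 1) * n := by
  have hw := w.isLt
  unfold auxLam
  split_ifs with hw0
  · simp only [Finset.mem_image, Finset.mem_range, hw0, add_zero]
    constructor
    · rintro ⟨k, hk, rfl⟩
      exact ⟨Dvd.intro_left k rfl, Nat.mul_le_mul_right n (by omega)⟩
    · rintro ⟨⟨k, rfl⟩, hle⟩
      refine ⟨k, ?_, Nat.mul_comm k n⟩
      rw [Nat.mul_comm n k] at hle
      have := Nat.le_of_mul_le_mul_right hle (by omega)
      omega
  · simp only [Finset.mem_image, Finset.mem_Icc]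
    constructor
    · rintro ⟨k, ⟨hk1, hk2⟩, rfl⟩
      have : w.val ≤ k * n := hw.le.trans (Nat.le_mul_of_pos_left n hk1)
      rw [Nat.sub_add_cancel this]
      exact ⟨Dvd.intro_left k rfl, Nat.mul_le_mul_right n hk2⟩
    · rintro ⟨⟨k, hk⟩, hle⟩
      rw [hk, Nat.mul_comm n k] at hle
      refine ⟨k, ⟨?_, Nat.le_of_mul_le_mul_right hle (by omega)⟩, ?_⟩
      · exact Nat.pos_of_ne_zero fun hk0 => by simp [hk0] at hk; omega
      · rw [Nat.mul_comm, ← hk]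
        simp

lemma auxWalk_t_add {n : ℕ} (i j : Fin n) :
    (auxWalk n i).t j + (i + j + 1) = (j + 1) * n := by
  have hi : i.val ≤ (j + 1) * (n - 1) :=
    (Nat.le_sub_one_of_lt i.isLt).trans (Nat.le_mul_of_pos_left _ j.succ_pos)
  have hmul : (j.val + 1) * n = (j + 1) * (n - 1) + (j + 1) := by
    rw [← Nat.mul_add_one, Nat.sub_add_cancel i.pos]
  simp only [auxWalk]
  omega

lemma auxWalk_isClosedPath {n : ℕ} (i : Fin n) :
    (auxWalk n i).IsClosedPath (auxD n) (auxLam n) i := by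
  refine ⟨⟨i.pos, fun j => ⟨?_, ?_⟩, fun j j' hjj' => ?_⟩, ?_, ?_, fun j j' hjj' => ?_⟩
  · show ((i + j) % n + 1) % n = (i + (j + 1)) % n
    rw [Nat.mod_add_mod, Nat.add_assoc]
  · rw [mem_auxLam_iff]
    show n ∣ _ + (i + (j + 1)) % n ∧ _ + (i + (j + 1)) % n ≤ (n - 1) * n
    have hlift := auxWalk_t_add i j
    rcases Nat.mod_cases_of_lt_two_mul (x := i + (j + 1)) (n := n) (by omega) with
      ⟨hx, h⟩ | ⟨_, h⟩
    · have : (auxWalk n i).t j + (i + (j + 1)) % n = (j + 1) * n := by omega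
      rw [this]
      exact ⟨Dvd.intro_left _ rfl, Nat.mul_le_mul_right n (by omega)⟩
    · have hsucc : (j.val + 1) * n = j * n + n := Nat.succ_mul _ _
      have : (auxWalk n i).t j + (i + (j + 1)) % n = j * n := by omega
      rw [this]
      exact ⟨Dvd.intro_left _ rfl, Nat.mul_le_mul_right n (by omega)⟩
  · exact Nat.sub_le_sub_right (Nat.mul_le_mul_right _ (by simpa using hjj')) _
  · exact Fin.ext (Nat.mod_eq_of_lt i.isLt)
  · exact Fin.ext ((Nat.add_mod_right _ _).trans (Nat.mod_eq_of_lt i.isLt))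
  · have h : (i + j) % n = (i + j') % n := congrArg Fin.val hjj'
    have := Nat.ModEq.add_left_cancel' _ h
    exact Fin.ext (by rwa [Nat.ModEq, Nat.mod_eq_of_lt (show j.val < n from j.isLt),
      Nat.mod_eq_of_lt (show j'.val < n from j'.isLt)] at this)

namespace TWalk

lemma ext_of_q_eq {V : Type*} {W W' : TWalk V} (hq : W.q = W'.q)
    (hv : ∀ m : Fin (W.q + 1), W.v m = W'.v (m.cast (by rw [hq])))
    (ht : ∀ m : Fin W.q, W.t m = W'.t (m.cast hq)) : W = W' := by
  obtain ⟨q, v, t⟩ := W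
  obtain ⟨q', v', t'⟩ := W'
  obtain rfl : q = q' := hq
  congr
  · exact funext hv
  · exact funext ht

variable {n : ℕ} {lam : Fin n → Fin n → Finset ℕ} {x i : Fin n} {W : TWalk (Fin n)}

lemma IsWalk.val_v_of_auxD (hW : W.IsWalk (auxD n) lam) (m : Fin (W.q + 1)) :
    (W.v m).val = (W.first.val + m) % n := by
  induction m using Fin.induction with
  | zero => simp [first, Nat.mod_eq_of_lt]
  | succ m ih =>
    rw [← (hW.2.1 m).1, ih, Fin.val_succ, Nat.mod_add_mod, Fin.val_castSucc, Nat.add_assoc]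

lemma IsClosedPath.q_eq_of_auxD (hW : W.IsClosedPath (auxD n) lam x) : W.q = n := by
  obtain ⟨hwalk, hfirst, hlast, hinj⟩ := hW
  have hle : W.q ≤ n := by simpa using Fintype.card_le_of_injective _ hinj
  have hclosed : x.val + W.q ≡ x.val + 0 [MOD n] := by
    have := hwalk.val_v_of_auxD (Fin.last W.q)
    rw [← last, hlast, hfirst, Fin.val_last] at this
    rw [Nat.ModEq, ← this, Nat.add_zero, Nat.mod_eq_of_lt x.isLt]
  have hdvd : n ∣ W.q := (Nat.modEq_zero_iff_dvd).1 (Nat.ModEq.add_left_cancel' _ hclosed)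
  exact le_antisymm hle (Nat.le_of_dvd hwalk.1 hdvd)

lemma IsClosedPath.t_add_of_aux (hW : W.IsClosedPath (auxD n) (auxLam n) i) (m : Fin W.q) :
    W.t m + (i + m + 1) = (m + 1) * n := by
  have hq := hW.q_eq_of_auxD
  have hlift : ∀ m : Fin W.q, n ∣ W.t m + (i + m + 1) ∧ W.t m + (i + m + 1) ≤ n * n := by
    intro m
    have hmem := (hW.1.2.1 m).2
    rw [mem_auxLam_iff, hW.1.val_v_of_auxD, hW.2.1, Fin.val_succ, ← Nat.add_assoc] at hmem
    have hsq : (n - 1) * n + n = n * n := by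
      rw [← Nat.succ_mul, Nat.succ_eq_add_one, Nat.sub_add_cancel i.pos]
    rcases Nat.mod_cases_of_lt_two_mul (x := i + m + 1) (n := n) (by omega) with
      ⟨_, h⟩ | ⟨_, h⟩
    · rw [h] at hmem
      exact ⟨hmem.1, by omega⟩
    · rw [← h, ← Nat.add_assoc]
      exact ⟨Nat.dvd_add hmem.1 (Nat.dvd_refl n), by omega⟩
  let a : Fin n → ℕ := fun m => W.t (m.cast hq.symm) + (i + m + 1)
  have ha : StrictMono a := fun m m' hmm' => by
    have : W.t (m.cast hq.symm) ≤ W.t (m'.cast hq.symm) := hW.1.2.2 _ _ (by simpa using hmm'.le)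
    simp only [a]
    have : m.val < m' := hmm'
    omega
  simpa [a] using ha.eq_succ_mul_of_dvd (fun _ => (hlift _).1)
    (fun _ => Nat.add_pos_right _ (Nat.succ_pos _)) (fun _ => (hlift _).2) (m.cast hq)

lemma IsClosedPath.eq_auxWalk (hW : W.IsClosedPath (auxD n) (auxLam n) i) :
    W = auxWalk n i :=
  ext_of_q_eq hW.q_eq_of_auxD
    (fun m => Fin.ext (by rw [hW.1.val_v_of_auxD, hW.2.1]; rfl))
    (fun m => Nat.add_right_cancel
      ((hW.t_add_of_aux m).trans (auxWalk_t_add i (m.cast hW.q_eq_of_auxD)).symm))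

end TWalk

theorem auxCycle_unique_closed_paths_general (n : ℕ) :
    (∀ v : Fin n, ∃! W : TWalk (Fin n), W.IsClosedPath (auxD n) (auxLam n) v) ∧
    ∀ i : Fin n, i.val ≤ n - 2 →
      (auxWalk n i).IsClosedPath (auxD n) (auxLam n) i ∧
      ∀ W : TWalk (Fin n), W.IsClosedPath (auxD n) (auxLam n) i → W = auxWalk n i :=
  ⟨fun v => ⟨auxWalk n v, auxWalk_isClosedPath v, fun _ hW => hW.eq_auxWalk⟩,
    fun i _ => ⟨auxWalk_isClosedPath i, fun _ hW => hW.eq_auxWalk⟩⟩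

/-- In the auxiliary cycle of order `n ≥ 2`, every vertex `v`
admits exactly one temporal `v,v`-path; moreover, for every `i ≤ n-2`, this
unique temporal `v_i,v_i`-path is `W_{v_i}` with times `t_i^j = j(n-1) - i`. -/
theorem auxCycle_unique_closed_paths (n : ℕ) (hn : 2 ≤ n) :
    (∀ v : Fin n, ∃! W : TWalk (Fin n), W.IsClosedPath (auxD n) (auxLam n) v) ∧
    ∀ i : Fin n, i.val ≤ n - 2 →
      (auxWalk n i).IsClosedPath (auxD n) (auxLam n) i ∧
      ∀ W : TWalk (Fin n), W.IsClosedPath (auxD n) (auxLam n) i → W = auxWalk n i :=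
  auxCycle_unique_closed_paths_general n
end

section
/- Let n ≥ 2 and let A be the auxiliary cycle of order n. For all indices i ≠ k with 0 ≤ i, k ≤ n−2, the unique temporal v_i,v_i-path W_{v_i} and the unique temporal v_k,v_k-path W_{v_k} share no temporal arc, i.e., there is no arc e of A and time t with t ∈ λ(e) that is used (as a pair (e, t)) by both paths. -/
variable {V : Type*}

/-! Only the times matter: the times of `W_{v_i}` are `j(n-1) - i ≡ -i (mod n-1)`, and
`0 ≤ i ≤ n-2` is a residue modulo `n-1`, so each single time of `W_{v_i}` determines `i`. -/

theorem Nat.eq_of_mul_add_eq_mul_add {m x y a b : ℕ} (ha : a < m) (hb : b < m)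
    (h : x * m + a = y * m + b) : a = b := by
  have hmod : a ≡ b [MOD m] := by
    simpa only [Nat.ModEq, Nat.mul_add_mod_self_right] using congrArg (· % m) h
  exact hmod.eq_of_lt_of_lt ha hb

theorem auxWalk_index_eq_of_time_eq {n : ℕ} {i k : Fin n} (hi : i.val < n - 1)
    (hk : k.val < n - 1) {j j' : Fin n} (h : (auxWalk n i).t j = (auxWalk n k).t j') :
    i = k := by
  change (j.val + 1) * (n - 1) - i.val = (j'.val + 1) * (n - 1) - k.val at h
  have hj : n - 1 ≤ (j.val + 1) * (n - 1) := Nat.le_mul_of_pos_left _ j.val.succ_pos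
  have hj' : n - 1 ≤ (j'.val + 1) * (n - 1) := Nat.le_mul_of_pos_left _ j'.val.succ_pos
  exact Fin.ext (Nat.eq_of_mul_add_eq_mul_add (x := j'.val + 1) (y := j.val + 1) hi hk (by omega))

/-- In the auxiliary cycle of order `n ≥ 2`, for indices
`i ≠ k` with `i, k ≤ n-2`, the temporal paths `W_{v_i}` and `W_{v_k}` share no
temporal arc. -/
theorem auxWalks_share_no_temporal_arc (n : ℕ) (hn : 2 ≤ n) (i k : Fin n)
    (hi : i.val ≤ n - 2) (hk : k.val ≤ n - 2) (hik : i ≠ k) :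
    ∀ p : (Fin n × Fin n) × ℕ,
      p ∈ (auxWalk n i).tarcs → p ∉ (auxWalk n k).tarcs := by
  rintro p ⟨j, rfl⟩ ⟨j', hp⟩
  exact hik (auxWalk_index_eq_of_time_eq (by omega) (by omega) (congrArg Prod.snd hp))
end

section
/- For every finite simple directed graph D there exists a temporization λ assigning exactly one natural-number time to each arc of D (the lexicographic temporization with respect to any linear order on the vertices) such that every (non-strict) temporal path in (D, λ) has length at most two. -/
variable {V : Type*}

/-!
Number the vertices injectively by `r`. Give an ascending arc `u → w` (`r u < r w`) the time
`N - r w` and a descending arc the time `N + r w`. Then two consecutive arcs `u → w → x` of a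
temporal walk can only have non-decreasing times when `w` is a strict local maximum of `r`,
i.e. the first arc ascends and the second descends. A temporal path with three arcs
`a → b → c → d` would make both `b` and `c` local maxima, which is impossible for adjacent
vertices.
-/

/-- The paper's lexicographic temporization for the vertex order induced by `r`. -/
def lexTime (r : V → ℕ) (N : ℕ) (u w : V) : ℕ :=
  if r u < r w then N - r w else N + r w

theorem lt_of_lexTime_le_lexTime {r : V → ℕ} {N : ℕ} (hr : Function.Injective r)
    (hN : ∀ v, r v ≤ N) {u w x : V} (huw : u ≠ w) (hwx : w ≠ x)
    (h : lexTime r N u w ≤ lexTime r N w x) : r u < r w ∧ r x < r w := by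
  have huw' := hr.ne huw
  have hwx' := hr.ne hwx
  have hNx := hN x
  unfold lexTime at h
  split_ifs at h <;> omega

namespace TWalk

theorem IsWalk.time_eq {D : V → V → Prop} {lam : V → V → ℕ} {W : TWalk V}
    (hW : W.IsWalk D fun u w => {lam u w}) (i : Fin W.q) :
    W.t i = lam (W.v i.castSucc) (W.v i.succ) :=
  Finset.mem_singleton.1 (hW.2.1 i).2

theorem q_le_two_of_isWalk_of_isLocalMax {D : V → V → Prop} {lam : V → V → ℕ} {f : V → ℕ}
    (hmax : ∀ u w x, u ≠ w → w ≠ x → lam u w ≤ lam w x → f u < f w ∧ f x < f w)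
    {W : TWalk V} (hW : W.IsWalk D fun u w => {lam u w}) (hinj : Function.Injective W.v) :
    W.q ≤ 2 := by
  by_contra! hq
  have hne : ∀ k (hk : k + 1 < W.q + 1), W.v ⟨k, by omega⟩ ≠ W.v ⟨k + 1, hk⟩ := fun k hk h => by
    simpa using hinj h
  have hle : ∀ k (hk : k + 1 < W.q), lam (W.v ⟨k, by omega⟩) (W.v ⟨k + 1, by omega⟩) ≤
      lam (W.v ⟨k + 1, by omega⟩) (W.v ⟨k + 2, by omega⟩) := fun k hk => by
    have := hW.2.2 ⟨k, by omega⟩ ⟨k + 1, hk⟩ (Fin.mk_le_mk.2 k.le_succ)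
    rwa [hW.time_eq, hW.time_eq] at this
  have hcb : f (W.v ⟨2, by omega⟩) < f (W.v ⟨1, by omega⟩) :=
    (hmax _ _ _ (hne 0 (by omega)) (hne 1 (by omega)) (hle 0 (by omega))).2
  have hbc : f (W.v ⟨1, by omega⟩) < f (W.v ⟨2, by omega⟩) :=
    (hmax _ _ _ (hne 1 (by omega)) (hne 2 (by omega)) (hle 1 (by omega))).1
  exact hcb.asymm hbc

end TWalk

theorem exists_temporization_paths_length_le_two_general (V : Type*) [Fintype V]
    (D : V → V → Prop) :
    ∃ lam : V → V → ℕ,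
      ∀ W : TWalk V, W.IsWalk D (fun u w => {lam u w}) →
        Function.Injective W.v → W.q ≤ 2 := by
  obtain ⟨N, ⟨e⟩⟩ := Finite.exists_equiv_fin V
  have hr : Function.Injective fun v => (e v : ℕ) := Fin.val_injective.comp e.injective
  exact ⟨lexTime (fun v => e v) N, fun W hW hinj =>
    TWalk.q_le_two_of_isWalk_of_isLocalMax
      (fun _ _ _ => lt_of_lexTime_le_lexTime hr fun v => (e v).isLt.le) hW hinj⟩

/-- Every finite simple digraph admits a temporization assigning
exactly one time to each arc such that every (non-strict) temporal path has
length at most two. -/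
theorem exists_temporization_paths_length_le_two (V : Type*) [Fintype V]
    [DecidableEq V] (D : V → V → Prop) (hloop : ∀ u, ¬ D u u) :
    ∃ lam : V → V → ℕ,
      ∀ W : TWalk V, W.IsWalk D (fun u w => {lam u w}) →
        Function.Injective W.v → W.q ≤ 2 :=
  exists_temporization_paths_length_le_two_general V D
end

section
/- Let D be a finite simple directed graph containing no cycle of length 2 (no pair of vertices u, v with both arcs (u, v) and (v, u)). Then there exists a temporization λ assigning to each arc of D a nonempty finite set of natural-number times such that the temporal digraph (D, λ) contains no simple-cycle. -/
variable {V : Type*}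

namespace TWalk

section vertex

variable (W : TWalk V)

/-- `W.v` indexed by `ℕ`; indices past `W.q` give the last vertex. -/
def vertex (i : ℕ) : V := W.v ⟨min i W.q, by omega⟩

lemma vertex_castSucc (i : Fin W.q) : W.vertex i = W.v i.castSucc := by
  simp only [vertex, min_eq_left i.is_lt.le]
  rfl

lemma vertex_succ (i : Fin W.q) : W.vertex (i + 1) = W.v i.succ := by
  simp only [vertex, min_eq_left (Nat.succ_le_of_lt i.is_lt)]
  rfl

lemma vertex_zero : W.vertex 0 = W.first := by
  simp [vertex, first]

lemma vertex_q : W.vertex W.q = W.last := by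
  simp only [vertex, last, min_self]
  rfl

end vertex

variable {D : V → V → Prop} {lam : V → V → Finset ℕ} {W : TWalk V} {x : V}

lemma IsWalk.adj_vertex (h : W.IsWalk D lam) {i : ℕ} (hi : i < W.q) :
    D (W.vertex i) (W.vertex (i + 1)) := by
  simpa only [← vertex_castSucc, ← vertex_succ] using (h.2.1 ⟨i, hi⟩).1

lemma IsWalk.exists_mem_le (h : W.IsWalk D lam) {i : ℕ} (hi : i + 1 < W.q) :
    ∃ s ∈ lam (W.vertex i) (W.vertex (i + 1)),
      ∃ s' ∈ lam (W.vertex (i + 1)) (W.vertex (i + 2)), s ≤ s' := by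
  have hs := (h.2.1 ⟨i, by omega⟩).2
  have hs' := (h.2.1 ⟨i + 1, hi⟩).2
  simp only [← vertex_castSucc, ← vertex_succ] at hs hs'
  exact ⟨_, hs, _, hs', h.2.2 _ _ (Fin.mk_le_mk.2 (Nat.le_succ i))⟩

lemma IsClosedPath.vertex_zero (h : W.IsClosedPath D lam x) : W.vertex 0 = x :=
  W.vertex_zero.trans h.2.1

lemma IsClosedPath.vertex_q (h : W.IsClosedPath D lam x) : W.vertex W.q = x :=
  W.vertex_q.trans h.2.2.1

lemma IsClosedPath.injOn_vertex (h : W.IsClosedPath D lam x) :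
    Set.InjOn W.vertex (Set.Iio W.q) := by
  intro i hi j hj hij
  have := @h.2.2.2 ⟨i, hi⟩ ⟨j, hj⟩
  simp only [← vertex_castSucc] at this
  exact congrArg Fin.val (this hij)

end TWalk

def rankTime (f : V → ℕ) (u w : V) : ℕ := if f u < f w then 2 * f w + 1 else 2 * f u

lemma le_and_lt_of_rankTime_le {f : V → ℕ} {u w x : V} (huw : f u ≠ f w)
    (h : rankTime f u w ≤ rankTime f w x) : f u ≤ f x ∧ f w < f x := by
  unfold rankTime at h
  split_ifs at h <;> omega

lemma TWalk.IsClosedPath.q_le_two_of_rankTime {D : V → V → Prop} {f : V → ℕ}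
    (hf : Function.Injective f) {x : V} {P : TWalk V}
    (hP : P.IsClosedPath D (fun u w => {rankTime f u w}) x) : P.q ≤ 2 := by
  by_contra! hq
  set a : ℕ → ℕ := fun i => f (P.vertex i)
  have step : ∀ i, i + 1 < P.q → a i ≤ a (i + 2) ∧ a (i + 1) < a (i + 2) := by
    intro i hi
    obtain ⟨s, hs, s', hs', hss'⟩ := hP.1.exists_mem_le hi
    rw [Finset.mem_singleton] at hs hs'
    refine le_and_lt_of_rankTime_le (hf.ne ?_) (hs ▸ hs' ▸ hss')
    exact hP.injOn_vertex.ne (Set.mem_Iio.2 (by omega)) (Set.mem_Iio.2 hi) (by omega)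
  have hmono : StrictMonoOn a (Set.Icc 1 P.q) :=
    strictMonoOn_of_lt_add_one Set.ordConnected_Icc fun i _ hi hi1 => by
      obtain ⟨j, rfl⟩ := Nat.exists_eq_add_one_of_ne_zero (Nat.one_le_iff_ne_zero.1 hi.1)
      exact (step j hi1.2).2
  have h02 : a 0 ≤ a 2 := (step 0 (by omega)).1
  have h2q : a 2 < a P.q := hmono ⟨by omega, hq.le⟩ ⟨by omega, le_rfl⟩ hq
  have hq0 : a P.q = a 0 := by simp only [a, hP.vertex_q, hP.vertex_zero]
  omega

/-- If a finite simple digraph `D` has no cycle of length 2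
(no digon), then there is a temporization assigning a nonempty finite set of
times to each arc such that `(D, lam)` contains no simple-cycle. -/
theorem simple_acyclic_temporization_of_no_digon (V : Type*) [Fintype V]
    (D : V → V → Prop) (hloop : ∀ u, ¬ D u u)
    (hdigon : ∀ u w, D u w → ¬ D w u) :
    ∃ lam : V → V → Finset ℕ, (∀ u w, D u w → (lam u w).Nonempty) ∧
      ¬ ∃ C : DiCycle V, C.IsCycle D ∧ IsSimpleCycle D lam C := by
  obtain ⟨f, hf⟩ := Countable.exists_injective_nat V
  refine ⟨fun u w => {rankTime f u w}, fun _ _ _ => Finset.singleton_nonempty _, ?_⟩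
  rintro ⟨-, -, x, -, P, hP, -⟩
  have h01 := hP.1.adj_vertex (i := 0) hP.1.1
  rw [zero_add, hP.vertex_zero] at h01
  have hq2 := hP.q_le_two_of_rankTime hf
  obtain hq | hq : P.q = 1 ∨ P.q = 2 := by have := hP.1.1; omega
  · rw [← hq, hP.vertex_q] at h01
    exact hloop x h01
  · have h12 := hP.1.adj_vertex (i := 1) (by omega)
    rw [show 1 + 1 = P.q by omega, hP.vertex_q] at h12
    exact hdigon _ _ h01 h12
end

section
/- Let D be a finite simple directed graph containing a cycle of length at most 3. Then for every temporization λ assigning to each arc of D a nonempty finite set of natural-number times, the temporal digraph (D, λ) contains a weak-cycle. -/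
variable {V : Type*}

/-! A digon is a weak-cycle trivially: its two arcs are a temporal path each way.
In a triangle with times `s, t, u` picked on its arcs, the times cannot strictly
decrease all the way around, so two consecutive arcs carry non-decreasing times and
form a temporal path of length two; the remaining arc is a temporal path back. -/

namespace TWalk

variable {D : V → V → Prop} {lam : V → V → Finset ℕ}

def single (x y : V) (t : ℕ) : TWalk V := ⟨1, ![x, y], ![t]⟩

def double (x y z : V) (s t : ℕ) : TWalk V := ⟨2, ![x, y, z], ![s, t]⟩

@[simp]
lemma arcs_single (x y : V) (t : ℕ) : (single x y t).arcs = {(x, y)} := by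
  ext p
  simp [arcs, single, Fin.exists_fin_one]

@[simp]
lemma arcs_double (x y z : V) (s t : ℕ) : (double x y z s t).arcs = {(x, y), (y, z)} := by
  ext p
  simp [arcs, double, Fin.exists_fin_two]

lemma isPath_single {x y : V} {t : ℕ} (hxy : x ≠ y) (hD : D x y) (ht : t ∈ lam x y) :
    (single x y t).IsPath D lam x y := by
  refine ⟨⟨le_rfl, fun i => ?_, fun i j _ => ?_⟩, rfl, rfl, fun i j hij => ?_⟩
  · fin_cases i; exact ⟨hD, ht⟩
  · fin_cases i; fin_cases j; rfl
  · fin_cases i <;> fin_cases j <;> simp_all [single, eq_comm]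

lemma isPath_double {x y z : V} {s t : ℕ} (hxy : x ≠ y) (hyz : y ≠ z) (hxz : x ≠ z)
    (hD₁ : D x y) (hD₂ : D y z) (hs : s ∈ lam x y) (ht : t ∈ lam y z) (hst : s ≤ t) :
    (double x y z s t).IsPath D lam x z := by
  refine ⟨⟨one_le_two, fun i => ?_, fun i j hij => ?_⟩, rfl, rfl, fun i j hij => ?_⟩
  · fin_cases i
    exacts [⟨hD₁, hs⟩, ⟨hD₂, ht⟩]
  · fin_cases i <;> fin_cases j <;> simp_all [double]
  · fin_cases i <;> fin_cases j <;> simp_all [double, eq_comm]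

end TWalk

namespace DiCycle

lemma eq_digon {C : DiCycle V} (h : C.q = 2) : ∃ a b : V, C = ⟨2, ![a, b]⟩ := by
  obtain ⟨q, v⟩ := C
  subst h
  exact ⟨v 0, v 1, by congr 1; ext i; fin_cases i <;> rfl⟩

lemma eq_triangle {C : DiCycle V} (h : C.q = 3) : ∃ a b c : V, C = ⟨3, ![a, b, c]⟩ := by
  obtain ⟨q, v⟩ := C
  subst h
  exact ⟨v 0, v 1, v 2, by congr 1; ext i; fin_cases i <;> rfl⟩

@[simp]
lemma vertices_triangle (a b c : V) :
    (⟨3, ![a, b, c]⟩ : DiCycle V).vertices = {a, b, c} := by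
  simp only [vertices, Matrix.range_cons, Matrix.range_empty, Set.union_empty,
    Set.singleton_union]

@[simp]
lemma arcs_digon (a b : V) : (⟨2, ![a, b]⟩ : DiCycle V).arcs = {(a, b), (b, a)} := by
  ext p
  simp [arcs, next, Fin.exists_fin_two]

@[simp]
lemma arcs_triangle (a b c : V) :
    (⟨3, ![a, b, c]⟩ : DiCycle V).arcs = {(a, b), (b, c), (c, a)} := by
  ext p
  simp [arcs, next, Fin.exists_fin_succ]

variable {D : V → V → Prop}

lemma IsCycle.digon {a b : V} (h : (⟨2, ![a, b]⟩ : DiCycle V).IsCycle D) :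
    a ≠ b ∧ D a b ∧ D b a := by
  obtain ⟨-, hinj, hD⟩ := h
  exact ⟨hinj.ne (by decide : (0 : Fin 2) ≠ 1), hD 0, by simpa [next] using hD 1⟩

lemma IsCycle.triangle {a b c : V} (h : (⟨3, ![a, b, c]⟩ : DiCycle V).IsCycle D) :
    a ≠ b ∧ b ≠ c ∧ a ≠ c ∧ D a b ∧ D b c ∧ D c a := by
  obtain ⟨-, hinj, hD⟩ := h
  exact ⟨hinj.ne (by decide : (0 : Fin 3) ≠ 1), hinj.ne (by decide : (1 : Fin 3) ≠ 2),
    hinj.ne (by decide : (0 : Fin 3) ≠ 2), hD 0, hD 1, by simpa [next] using hD 2⟩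

end DiCycle

section WeakCycle

variable {D : V → V → Prop} {lam : V → V → Finset ℕ}

lemma isWeakCycle_digon {a b : V} {s t : ℕ} (hab : a ≠ b) (hD₁ : D a b) (hD₂ : D b a)
    (hs : s ∈ lam a b) (ht : t ∈ lam b a) : IsWeakCycle D lam ⟨2, ![a, b]⟩ :=
  ⟨a, ⟨0, rfl⟩, b, ⟨1, rfl⟩, hab, .single a b s, .single b a t,
    TWalk.isPath_single hab hD₁ hs, TWalk.isPath_single hab.symm hD₂ ht,
    by rw [TWalk.arcs_single, TWalk.arcs_single, DiCycle.arcs_digon, Set.singleton_union]⟩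

lemma isWeakCycle_of_arcs_eq_triangle {C : DiCycle V} {a b c : V} {s t u : ℕ}
    (ha : a ∈ C.vertices) (hc : c ∈ C.vertices) (harcs : C.arcs = {(a, b), (b, c), (c, a)})
    (hab : a ≠ b) (hbc : b ≠ c) (hac : a ≠ c) (hD₁ : D a b) (hD₂ : D b c) (hD₃ : D c a)
    (hs : s ∈ lam a b) (ht : t ∈ lam b c) (hu : u ∈ lam c a) (hst : s ≤ t) :
    IsWeakCycle D lam C :=
  ⟨a, ha, c, hc, hac, .double a b c s t, .single c a u,
    TWalk.isPath_double hab hbc hac hD₁ hD₂ hs ht hst, TWalk.isPath_single hac.symm hD₃ hu,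
    by rw [harcs, TWalk.arcs_double, TWalk.arcs_single, Set.insert_union, Set.singleton_union]⟩

lemma isWeakCycle_triangle {a b c : V} {s t u : ℕ} (hab : a ≠ b) (hbc : b ≠ c) (hac : a ≠ c)
    (hD₁ : D a b) (hD₂ : D b c) (hD₃ : D c a)
    (hs : s ∈ lam a b) (ht : t ∈ lam b c) (hu : u ∈ lam c a) :
    IsWeakCycle D lam ⟨3, ![a, b, c]⟩ := by
  have harcs := DiCycle.arcs_triangle a b c
  obtain hst | htu | hus : s ≤ t ∨ t ≤ u ∨ u ≤ s := by omega
  · exact isWeakCycle_of_arcs_eq_triangle (by simp) (by simp) harcs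
      hab hbc hac hD₁ hD₂ hD₃ hs ht hu hst
  · refine isWeakCycle_of_arcs_eq_triangle (by simp) (by simp) ?_
      hbc hac.symm hab.symm hD₂ hD₃ hD₁ ht hu hs htu
    rw [harcs]; ext; simp only [Set.mem_insert_iff, Set.mem_singleton_iff]; tauto
  · refine isWeakCycle_of_arcs_eq_triangle (by simp) (by simp) ?_
      hac.symm hab hbc.symm hD₃ hD₁ hD₂ hu hs ht hus
    rw [harcs]; ext; simp only [Set.mem_insert_iff, Set.mem_singleton_iff]; tauto

lemma DiCycle.IsCycle.isWeakCycle_of_q_le_three {C : DiCycle V} (hC : C.IsCycle D)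
    (hq : C.q ≤ 3) (hlam : ∀ u w, D u w → (lam u w).Nonempty) : IsWeakCycle D lam C := by
  obtain h | h : C.q = 2 ∨ C.q = 3 := by have := hC.1; omega
  · obtain ⟨a, b, rfl⟩ := DiCycle.eq_digon h
    obtain ⟨hab, hD₁, hD₂⟩ := hC.digon
    obtain ⟨s, hs⟩ := hlam _ _ hD₁
    obtain ⟨t, ht⟩ := hlam _ _ hD₂
    exact isWeakCycle_digon hab hD₁ hD₂ hs ht
  · obtain ⟨a, b, c, rfl⟩ := DiCycle.eq_triangle h
    obtain ⟨hab, hbc, hac, hD₁, hD₂, hD₃⟩ := hC.triangle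
    obtain ⟨s, hs⟩ := hlam _ _ hD₁
    obtain ⟨t, ht⟩ := hlam _ _ hD₂
    obtain ⟨u, hu⟩ := hlam _ _ hD₃
    exact isWeakCycle_triangle hab hbc hac hD₁ hD₂ hD₃ hs ht hu

end WeakCycle

theorem weakCycle_of_short_cycle_general (V : Type*) (D : V → V → Prop)
    (C₀ : DiCycle V) (hC₀ : C₀.IsCycle D) (hq : C₀.q ≤ 3)
    (lam : V → V → Finset ℕ) (hlam : ∀ u w, D u w → (lam u w).Nonempty) :
    ∃ C : DiCycle V, C.IsCycle D ∧ IsWeakCycle D lam C :=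
  ⟨C₀, hC₀, hC₀.isWeakCycle_of_q_le_three hq hlam⟩

/-- If a finite simple digraph `D` contains a cycle of length at
most 3, then for every temporization assigning nonempty finite time sets to the
arcs, `(D, lam)` contains a weak-cycle. -/
theorem weakCycle_of_short_cycle (V : Type*) [Fintype V] (D : V → V → Prop)
    (hloop : ∀ u, ¬ D u u) (C₀ : DiCycle V) (hC₀ : C₀.IsCycle D) (hq : C₀.q ≤ 3)
    (lam : V → V → Finset ℕ) (hlam : ∀ u w, D u w → (lam u w).Nonempty) :
    ∃ C : DiCycle V, C.IsCycle D ∧ IsWeakCycle D lam C :=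
  weakCycle_of_short_cycle_general V D C₀ hC₀ hq lam hlam
end

section
/- Let (D, λ) be a temporal digraph with lifetime 2 (every λ(e) is a nonempty subset of {1, 2}). If (D, λ) contains no simple-cycle, then: (a) D contains no cycle of length 2 or 3; and (b) for every cycle C = (a, b, c, d) of length 4 in D with arcs e_1 = (a, b), e_2 = (b, c), e_3 = (c, d), e_4 = (d, a), each λ(e_i) is a singleton and λ(e_1) = λ(e_3) ≠ λ(e_2) = λ(e_4). -/
variable {V : Type*}

/-! A temporal closed path around a cycle may start at any vertex, so a cycle is a simple-cycle as
soon as some choice of times on its arcs has at most one cyclic descent `t i > t (i + 1)`: start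
right after it. Without simple-cycles, every choice of times on every cycle therefore has two
descents. In lifetime two a descent goes from time `2` to time `1`, so the two descents occupy four
distinct arcs and the cycle has length at least four. On a four-cycle these four arcs are all the
arcs, so no two consecutive arcs can be given a common time: their time sets are disjoint nonempty
subsets of `{1, 2}`, that is, complementary singletons. -/

namespace DiCycle

variable (C : DiCycle V)

def shift (s : Fin C.q) (k : ℕ) : Fin C.q :=
  ⟨(s + 1 + k) % C.q, Nat.mod_lt _ s.pos⟩

theorem next_shift (s : Fin C.q) (k : ℕ) : C.next (C.shift s k) = C.shift s (k + 1) :=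
  Fin.ext <| by simp only [next, shift, Nat.mod_add_mod, Nat.add_assoc]

theorem shift_add_q (s : Fin C.q) (k : ℕ) : C.shift s (k + C.q) = C.shift s k :=
  Fin.ext <| by simp only [shift, ← Nat.add_assoc, Nat.add_mod_right]

theorem shift_q_sub_one (s : Fin C.q) : C.shift s (C.q - 1) = s :=
  Fin.ext <| by
    simp only [shift]
    rw [show (s : ℕ) + 1 + (C.q - 1) = s + C.q by have := s.pos; omega, Nat.add_mod_right,
      Nat.mod_eq_of_lt s.isLt]

theorem shift_injOn (s : Fin C.q) : Set.InjOn (C.shift s) (Set.Iio C.q) := by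
  intro k hk l hl h
  have hmod : (s + 1 + k) % C.q = (s + 1 + l) % C.q := congrArg Fin.val h
  have := Nat.ModEq.add_left_cancel' (s + 1) hmod
  rwa [Nat.ModEq, Nat.mod_eq_of_lt hk, Nat.mod_eq_of_lt (Set.mem_Iio.mp hl)] at this

theorem next_injective : Function.Injective C.next := by
  intro i j h
  have hmod : (i + 1) % C.q = (j + 1) % C.q := congrArg Fin.val h
  have := Nat.ModEq.add_right_cancel' 1 hmod
  exact Fin.ext <| by rwa [Nat.ModEq, Nat.mod_eq_of_lt i.isLt, Nat.mod_eq_of_lt j.isLt] at this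

end DiCycle

section SimpleCycle

variable {D : V → V → Prop} {lam : V → V → Finset ℕ} {C : DiCycle V}

/-- Traverse `C` starting at the head of arc `s`, whose time is the only one allowed to drop. -/
theorem isSimpleCycle_of_le_next (hC : C.IsCycle D) {t : Fin C.q → ℕ}
    (ht : ∀ i, t i ∈ lam (C.v i) (C.v (C.next i))) (s : Fin C.q)
    (hs : ∀ i ≠ s, t i ≤ t (C.next i)) : IsSimpleCycle D lam C := by
  let P : TWalk V := ⟨C.q, fun k => C.v (C.shift s k), fun k => t (C.shift s k)⟩
  have step : ∀ m, m + 1 < C.q → t (C.shift s m) ≤ t (C.shift s (m + 1)) := by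
    intro m hm
    rw [← C.next_shift]
    refine hs _ fun h => ?_
    have := C.shift_injOn s (Set.mem_Iio.mpr (by omega)) (Set.mem_Iio.mpr (by omega))
      (h.trans (C.shift_q_sub_one s).symm)
    omega
  have mono : ∀ k l, k ≤ l → l < C.q → t (C.shift s k) ≤ t (C.shift s l) := by
    intro k l hkl
    induction l, hkl using Nat.le_induction with
    | base => exact fun _ => le_rfl
    | succ l _ ih => exact fun hl => (ih (by omega)).trans (step l hl)
  refine ⟨C.v (C.shift s 0), ⟨_, rfl⟩, P, ⟨⟨s.pos, fun k => ?_, fun k l hkl => mono k l hkl l.isLt⟩,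
    rfl, ?_, fun k l h => Fin.ext (C.shift_injOn s k.isLt l.isLt (hC.2.1 h))⟩, ?_⟩
  · simp only [P, Fin.val_castSucc, Fin.val_succ, ← C.next_shift]
    exact ⟨hC.2.2 _, ht _⟩
  · simp only [TWalk.last, P, Fin.val_last]
    rw [← Nat.zero_add C.q, C.shift_add_q]
  · have hsurj : Function.Surjective fun k : Fin C.q => C.shift s k :=
      Finite.injective_iff_surjective.mp fun k l h => Fin.ext (C.shift_injOn s k.isLt l.isLt h)
    ext p
    constructor
    · rintro ⟨k, rfl⟩
      exact ⟨C.shift s k, by simp [P, C.next_shift]⟩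
    · rintro ⟨i, rfl⟩
      obtain ⟨k, rfl⟩ := hsurj i
      exact ⟨k, by simp [P, C.next_shift]⟩

theorem exists_two_descents_of_not_isSimpleCycle (hC : C.IsCycle D)
    (hnot : ¬ IsSimpleCycle D lam C) {t : Fin C.q → ℕ}
    (ht : ∀ i, t i ∈ lam (C.v i) (C.v (C.next i))) :
    ∃ i j, i ≠ j ∧ t (C.next i) < t i ∧ t (C.next j) < t j := by
  by_contra! h
  by_cases hmono : ∀ i, t i ≤ t (C.next i)
  · exact hnot (isSimpleCycle_of_le_next hC ht ⟨0, by have := hC.1; omega⟩ fun i _ => hmono i)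
  · obtain ⟨s, hs⟩ := not_forall.mp hmono
    exact hnot (isSimpleCycle_of_le_next hC ht s fun i hi => h s i (Ne.symm hi) (not_le.mp hs))

theorem exists_two_drops_of_not_isSimpleCycle (htau : ∀ u w, lam u w ⊆ {1, 2})
    (hC : C.IsCycle D) (hnot : ¬ IsSimpleCycle D lam C) {t : Fin C.q → ℕ}
    (ht : ∀ i, t i ∈ lam (C.v i) (C.v (C.next i))) :
    ∃ i j, i ≠ j ∧ t i = 2 ∧ t (C.next i) = 1 ∧ t j = 2 ∧ t (C.next j) = 1 := by
  have drop : ∀ i, t (C.next i) < t i → t i = 2 ∧ t (C.next i) = 1 := by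
    intro i hi
    have h1 := htau _ _ (ht i)
    have h2 := htau _ _ (ht (C.next i))
    simp only [Finset.mem_insert, Finset.mem_singleton] at h1 h2
    omega
  obtain ⟨i, j, hij, hi, hj⟩ := exists_two_descents_of_not_isSimpleCycle hC hnot ht
  exact ⟨i, j, hij, (drop i hi).1, (drop i hi).2, (drop j hj).1, (drop j hj).2⟩

theorem DiCycle.card_drops_eq_four {t : Fin C.q → ℕ} {i j : Fin C.q} (hij : i ≠ j)
    (hi : t i = 2) (hi' : t (C.next i) = 1) (hj : t j = 2) (hj' : t (C.next j) = 1) :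
    ({i, j, C.next i, C.next j} : Finset (Fin C.q)).card = 4 := by
  have hne : ∀ k l, t k = 2 → t l = 1 → k ≠ l := fun k l hk hl h => by
    rw [h] at hk; omega
  rw [Finset.card_insert_of_notMem, Finset.card_insert_of_notMem, Finset.card_pair]
  · exact fun h => hij (C.next_injective h)
  · simp only [Finset.mem_insert, Finset.mem_singleton, not_or]
    exact ⟨hne j _ hj hi', hne j _ hj hj'⟩
  · simp only [Finset.mem_insert, Finset.mem_singleton, not_or]
    exact ⟨hij, hne i _ hi hi', hne i _ hi hj'⟩

theorem exists_timing (hne : ∀ u w, D u w → (lam u w).Nonempty) (hC : C.IsCycle D) :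
    ∃ t : Fin C.q → ℕ, ∀ i, t i ∈ lam (C.v i) (C.v (C.next i)) :=
  ⟨fun i => (hne _ _ (hC.2.2 i)).choose, fun i => (hne _ _ (hC.2.2 i)).choose_spec⟩

theorem four_le_q_of_not_isSimpleCycle (hne : ∀ u w, D u w → (lam u w).Nonempty)
    (htau : ∀ u w, lam u w ⊆ {1, 2}) (hC : C.IsCycle D) (hnot : ¬ IsSimpleCycle D lam C) :
    4 ≤ C.q := by
  obtain ⟨t, ht⟩ := exists_timing hne hC
  obtain ⟨i, j, hij, hi, hi', hj, hj'⟩ := exists_two_drops_of_not_isSimpleCycle htau hC hnot ht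
  calc 4 = ({i, j, C.next i, C.next j} : Finset (Fin C.q)).card :=
        (C.card_drops_eq_four hij hi hi' hj hj').symm
    _ ≤ C.q := (Finset.card_le_univ _).trans_eq (Fintype.card_fin _)

/-- On a four-cycle the two drops cover all four arcs, so consecutive arcs cannot share a time. -/
theorem disjoint_lam_next_of_q_eq_four (hne : ∀ u w, D u w → (lam u w).Nonempty)
    (htau : ∀ u w, lam u w ⊆ {1, 2}) (hC : C.IsCycle D) (hnot : ¬ IsSimpleCycle D lam C)
    (hq : C.q = 4) (k : Fin C.q) :
    Disjoint (lam (C.v k) (C.v (C.next k))) (lam (C.v (C.next k)) (C.v (C.next (C.next k)))) := by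
  rw [Finset.disjoint_left]
  intro x hxk hxk'
  obtain ⟨t₀, ht₀⟩ := exists_timing hne hC
  let t : Fin C.q → ℕ := fun i => if i = k ∨ i = C.next k then x else t₀ i
  have ht : ∀ i, t i ∈ lam (C.v i) (C.v (C.next i)) := by
    intro i
    simp only [t]
    split_ifs with h
    · rcases h with rfl | rfl <;> assumption
    · exact ht₀ i
  have htk : t k = t (C.next k) := by simp [t]
  obtain ⟨i, j, hij, hi, hi', hj, hj'⟩ := exists_two_drops_of_not_isSimpleCycle htau hC hnot ht
  have huniv := Finset.eq_univ_of_card _ ((C.card_drops_eq_four hij hi hi' hj hj').trans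
    (by rw [Fintype.card_fin, hq]))
  have hcover : ∀ l, l = i ∨ l = j ∨ l = C.next i ∨ l = C.next j := by
    intro l
    have := Finset.mem_univ l
    rw [← huniv] at this
    simpa only [Finset.mem_insert, Finset.mem_singleton] using this
  have hk : t k = 1 := by
    rcases hcover k with rfl | rfl | rfl | rfl <;> omega
  have hnext : t (C.next k) = 1 := htk ▸ hk
  rcases hcover (C.next k) with h | h | h | h
  · rw [h] at hnext; omega
  · rw [h] at hnext; omega
  · rw [C.next_injective h] at hk; omega
  · rw [C.next_injective h] at hk; omega

end SimpleCycle

namespace Finset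

variable {α : Type*} [DecidableEq α] {U S T : Finset α}

theorem card_eq_one_of_disjoint_of_card_eq_two (hU : U.card = 2) (hS : S ⊆ U) (hT : T ⊆ U)
    (hSne : S.Nonempty) (hTne : T.Nonempty) (hST : Disjoint S T) : S.card = 1 := by
  have := (card_union_of_disjoint hST).symm.trans_le (card_le_card (union_subset hS hT))
  have := hSne.card_pos
  have := hTne.card_pos
  omega

theorem eq_sdiff_of_disjoint_of_card_eq_two (hU : U.card = 2) (hS : S ⊆ U) (hT : T ⊆ U)
    (hSne : S.Nonempty) (hTne : T.Nonempty) (hST : Disjoint S T) : S = U \ T := by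
  refine eq_of_subset_of_card_le (subset_sdiff.mpr ⟨hS, hST⟩) ?_
  rw [card_sdiff_of_subset hT, hU,
    card_eq_one_of_disjoint_of_card_eq_two hU hS hT hSne hTne hST,
    card_eq_one_of_disjoint_of_card_eq_two hU hT hS hTne hSne hST.symm]

theorem alternating_of_disjoint_of_card_eq_two {S₀ S₁ S₂ S₃ : Finset α} (hU : U.card = 2)
    (hS₀ : S₀ ⊆ U) (hS₁ : S₁ ⊆ U) (hS₂ : S₂ ⊆ U) (hS₃ : S₃ ⊆ U)
    (hne₀ : S₀.Nonempty) (hne₁ : S₁.Nonempty) (hne₂ : S₂.Nonempty) (hne₃ : S₃.Nonempty)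
    (h₀₁ : Disjoint S₀ S₁) (h₁₂ : Disjoint S₁ S₂) (h₂₃ : Disjoint S₂ S₃) (h₃₀ : Disjoint S₃ S₀) :
    S₀.card = 1 ∧ S₁.card = 1 ∧ S₂.card = 1 ∧ S₃.card = 1 ∧ S₀ = S₂ ∧ S₁ = S₃ ∧ S₀ ≠ S₁ := by
  refine ⟨card_eq_one_of_disjoint_of_card_eq_two hU hS₀ hS₁ hne₀ hne₁ h₀₁,
    card_eq_one_of_disjoint_of_card_eq_two hU hS₁ hS₂ hne₁ hne₂ h₁₂,
    card_eq_one_of_disjoint_of_card_eq_two hU hS₂ hS₃ hne₂ hne₃ h₂₃,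
    card_eq_one_of_disjoint_of_card_eq_two hU hS₃ hS₀ hne₃ hne₀ h₃₀,
    (eq_sdiff_of_disjoint_of_card_eq_two hU hS₀ hS₁ hne₀ hne₁ h₀₁).trans
      (eq_sdiff_of_disjoint_of_card_eq_two hU hS₂ hS₁ hne₂ hne₁ h₁₂.symm).symm,
    (eq_sdiff_of_disjoint_of_card_eq_two hU hS₁ hS₂ hne₁ hne₂ h₁₂).trans
      (eq_sdiff_of_disjoint_of_card_eq_two hU hS₃ hS₂ hne₃ hne₂ h₂₃.symm).symm,
    fun h => ?_⟩
  rw [h, disjoint_self, bot_eq_empty] at h₀₁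
  exact hne₁.ne_empty h₀₁

end Finset

theorem lifetime_two_no_simpleCycle_general (V : Type*) (D : V → V → Prop)
    (lam : V → V → Finset ℕ)
    (hne : ∀ u w, D u w → (lam u w).Nonempty)
    (htau : ∀ u w, lam u w ⊆ {1, 2})
    (hns : ¬ ∃ C : DiCycle V, C.IsCycle D ∧ IsSimpleCycle D lam C) :
    (∀ C : DiCycle V, C.IsCycle D → C.q ≠ 2 ∧ C.q ≠ 3) ∧
    ∀ a b c d : V, [a, b, c, d].Pairwise (· ≠ ·) →
      D a b → D b c → D c d → D d a →
        (lam a b).card = 1 ∧ (lam b c).card = 1 ∧ (lam c d).card = 1 ∧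
        (lam d a).card = 1 ∧ lam a b = lam c d ∧ lam b c = lam d a ∧
        lam a b ≠ lam b c := by
  have hnot (C : DiCycle V) (hC : C.IsCycle D) : ¬ IsSimpleCycle D lam C :=
    fun hs => hns ⟨C, hC, hs⟩
  refine ⟨fun C hC => ?_, fun a b c d habcd hab hbc hcd hda => ?_⟩
  · have := four_le_q_of_not_isSimpleCycle hne htau hC (hnot C hC)
    omega
  let C : DiCycle V := ⟨4, [a, b, c, d].get⟩
  have hC : C.IsCycle D := ⟨show 2 ≤ 4 by norm_num, List.Nodup.injective_get habcd, by
    intro i; fin_cases i <;> simpa [C, DiCycle.next]⟩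
  have hdisj (k : Fin 4) := disjoint_lam_next_of_q_eq_four hne htau hC (hnot C hC) rfl k
  have h0 : Disjoint (lam a b) (lam b c) := by simpa [C, DiCycle.next] using hdisj 0
  have h1 : Disjoint (lam b c) (lam c d) := by simpa [C, DiCycle.next] using hdisj 1
  have h2 : Disjoint (lam c d) (lam d a) := by simpa [C, DiCycle.next] using hdisj 2
  have h3 : Disjoint (lam d a) (lam a b) := by simpa [C, DiCycle.next] using hdisj 3
  exact Finset.alternating_of_disjoint_of_card_eq_two rfl (htau a b) (htau b c) (htau c d)
    (htau d a) (hne a b hab) (hne b c hbc) (hne c d hcd) (hne d a hda) h0 h1 h2 h3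

/-- Let `(D, lam)` be a temporal digraph with lifetime 2. If
`(D, lam)` contains no simple-cycle, then (a) `D` has no cycle of length 2 or 3,
and (b) on every 4-cycle `(a, b, c, d)` all four time sets are singletons and
`lam(e₁) = lam(e₃) ≠ lam(e₂) = lam(e₄)`. -/
theorem lifetime_two_no_simpleCycle (V : Type*) [Fintype V] (D : V → V → Prop)
    (lam : V → V → Finset ℕ) (hloop : ∀ u, ¬ D u u)
    (hne : ∀ u w, D u w → (lam u w).Nonempty)
    (htau : ∀ u w, lam u w ⊆ {1, 2})
    (hns : ¬ ∃ C : DiCycle V, C.IsCycle D ∧ IsSimpleCycle D lam C) :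
    (∀ C : DiCycle V, C.IsCycle D → C.q ≠ 2 ∧ C.q ≠ 3) ∧
    ∀ a b c d : V, [a, b, c, d].Pairwise (· ≠ ·) →
      D a b → D b c → D c d → D d a →
        (lam a b).card = 1 ∧ (lam b c).card = 1 ∧ (lam c d).card = 1 ∧
        (lam d a).card = 1 ∧ lam a b = lam c d ∧ lam b c = lam d a ∧
        lam a b ≠ lam b c :=
  lifetime_two_no_simpleCycle_general V D lam hne htau hns
end

section
/- Let (D, λ) be a temporal digraph with lifetime 2 (every λ(e) is a nonempty subset of {1, 2}). If (D, λ) contains no weak-cycle, then: (a) D contains no cycle on fewer than 6 vertices; and (b) for every cycle C = (a, b, c, d, e, f) of length 6 in D with arcs e_1 = (a, b), e_2 = (b, c), e_3 = (c, d), e_4 = (d, e), e_5 = (e, f), e_6 = (f, a), each λ(e_i) is a singleton and λ(e_1) = λ(e_3) = λ(e_5) ≠ λ(e_2) = λ(e_4) = λ(e_6). -/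
variable {V : Type*}

/-!
Fix one time on every arc of a cycle. Call a position a descent if the time drops right after
it. If all descents lie among two positions, cutting the cycle there splits it into two temporal
paths, i.e. a weak-cycle; so without weak-cycles every cycle has at least three descents. With
times in `{1, 2}` a descent is a `2` followed by a `1`, so the descents and their successors are
`2 · #descents` distinct positions: the cycle has length at least `6`, and on a `6`-cycle these
positions exhaust the cycle, so the times alternate. As this holds for every choice of times,
changing the time of a single arc would break the alternation, so every time set is a singleton.
-/

open Finset Function

section Descents

variable {q : ℕ} {τ : ℕ → ℕ}

def descents (q : ℕ) (τ : ℕ → ℕ) : Finset ℕ := {i ∈ range q | τ (i + 1) < τ i}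

lemma three_le_card_descents_of_exists_ne (hq : 2 ≤ q)
    (h : ∀ c₁ c₂, c₁ < q → c₂ < q → c₁ ≠ c₂ → ∃ i ∈ descents q τ, i ≠ c₁ ∧ i ≠ c₂) :
    3 ≤ #(descents q τ) := by
  have lt_of_mem : ∀ i ∈ descents q τ, i < q := fun i hi => mem_range.1 (mem_filter.1 hi).1
  obtain ⟨d₁, h₁, h₁₀, -⟩ := h 0 1 (by omega) (by omega) zero_ne_one
  obtain ⟨d₂, h₂, -, h₂₁⟩ := h 0 d₁ (by omega) (lt_of_mem d₁ h₁) h₁₀.symm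
  obtain ⟨d₃, h₃, h₃₁, h₃₂⟩ := h d₁ d₂ (lt_of_mem d₁ h₁) (lt_of_mem d₂ h₂) h₂₁.symm
  exact two_lt_card.2 ⟨d₁, h₁, d₂, h₂, d₃, h₃, h₂₁.symm, h₃₁.symm, h₃₂.symm⟩

lemma injOn_add_one_mod (q : ℕ) : Set.InjOn (fun i => (i + 1) % q) (Set.Iio q) :=
  fun _ hi _ hj h => (Nat.ModEq.add_right_cancel' 1 h).eq_of_lt_of_lt hi hj

lemma mem_descents_iff (hτ : ∀ i, τ i = 1 ∨ τ i = 2) {i : ℕ} :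
    i ∈ descents q τ ↔ i < q ∧ τ i = 2 ∧ τ (i + 1) = 1 := by
  have := hτ i
  have := hτ (i + 1)
  simp only [descents, mem_filter, mem_range]
  omega

lemma card_descents_union_image (hper : Periodic τ q) (hτ : ∀ i, τ i = 1 ∨ τ i = 2) :
    #(descents q τ ∪ (descents q τ).image fun i => (i + 1) % q) = 2 * #(descents q τ) := by
  rw [card_union_of_disjoint, card_image_of_injOn, two_mul]
  · exact (injOn_add_one_mod q).mono fun i hi => ((mem_descents_iff hτ).1 hi).1
  · simp only [disjoint_left, mem_image, mem_descents_iff hτ, not_exists, not_and]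
    rintro _ ⟨-, hi, -⟩ j ⟨-, -, hj⟩ rfl
    rw [hper.map_mod_nat] at hi
    omega

lemma descents_union_image_subset_range (hq : 0 < q) :
    descents q τ ∪ (descents q τ).image (fun i => (i + 1) % q) ⊆ range q := by
  refine union_subset (filter_subset _ _) fun i hi => ?_
  obtain ⟨j, -, rfl⟩ := mem_image.1 hi
  exact mem_range.2 (Nat.mod_lt _ hq)

lemma two_mul_card_descents_le (hq : 0 < q) (hper : Periodic τ q)
    (hτ : ∀ i, τ i = 1 ∨ τ i = 2) : 2 * #(descents q τ) ≤ q := by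
  simpa [card_descents_union_image hper hτ] using
    card_le_card (descents_union_image_subset_range (τ := τ) hq)

lemma two_mul_card_descents_lt (hper : Periodic τ q) (hτ : ∀ i, τ i = 1 ∨ τ i = 2)
    {j : ℕ} (hj : j < q) (hflat : τ (j + 1) = τ j) : 2 * #(descents q τ) < q := by
  have hq : 0 < q := by omega
  rw [← card_descents_union_image hper hτ]
  refine (card_lt_card ((ssubset_iff_of_subset (descents_union_image_subset_range hq)).2 ?_))
    |>.trans_eq (card_range q)
  simp only [mem_union, mem_image, mem_descents_iff hτ, mem_range, not_or, not_exists, not_and]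
  rcases hτ j with hj₁ | hj₂
  · refine ⟨(j + 1) % q, Nat.mod_lt _ hq, fun _ h _ => ?_, fun i ⟨hi, hi₂, _⟩ hij => ?_⟩
    · rw [hper.map_mod_nat] at h
      omega
    · rw [injOn_add_one_mod q hi hj hij] at hi₂
      omega
  · refine ⟨j, hj, fun _ _ _ => by omega, fun i ⟨_, _, hi₁⟩ hij => ?_⟩
    rw [← hij, hper.map_mod_nat] at hj₂
    omega

end Descents

lemma Nat.exists_modEq_mem_Ico {q : ℕ} (hq : 0 < q) (a n : ℕ) :
    ∃ m ∈ Set.Ico a (a + q), m ≡ n [MOD q] := by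
  have := Nat.mod_lt (n + (q - a % q)) hq
  refine ⟨a + (n + (q - a % q)) % q, ⟨by omega, by omega⟩, ?_⟩
  have h : a + (n + (q - a % q)) = q * (a / q + 1) + n := by
    have := Nat.div_add_mod a q
    have := Nat.mod_lt a hq
    rw [Nat.mul_add]
    omega
  unfold Nat.ModEq
  rw [Nat.add_mod_mod, h, Nat.mul_add_mod]

variable {D : V → V → Prop} {lam : V → V → Finset ℕ}

lemma exists_time_selection (hne : ∀ u v, D u v → (lam u v).Nonempty) :
    ∃ σ : V → V → ℕ, ∀ u v, D u v → σ u v ∈ lam u v := by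
  classical
  exact ⟨fun u v => if h : D u v then (hne u v h).choose else 0,
    fun u v h => by simpa only [dif_pos h] using (hne u v h).choose_spec⟩

/-- `w` lists the vertices of a `q`-cycle of `D` periodically, so positions along the cycle are
indexed by `ℕ`. -/
structure IsCycleEnum (D : V → V → Prop) (q : ℕ) (w : ℕ → V) : Prop where
  two_le : 2 ≤ q
  eq_iff_modEq : ∀ i j, w i = w j ↔ i ≡ j [MOD q]
  adj : ∀ i, D (w i) (w (i + 1))

def DiCycle.ofSeq (q : ℕ) (w : ℕ → V) : DiCycle V := ⟨q, fun i => w i⟩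

lemma DiCycle.ofSeq_ofNat {q : ℕ} [NeZero q] (v : Fin q → V) :
    DiCycle.ofSeq q (fun n => v (Fin.ofNat q n)) = ⟨q, v⟩ := by
  simp [DiCycle.ofSeq]

lemma DiCycle.IsCycle.isCycleEnum {q : ℕ} [NeZero q] {v : Fin q → V}
    (h : (DiCycle.mk q v).IsCycle D) : IsCycleEnum D q fun n => v (Fin.ofNat q n) where
  two_le := h.1
  eq_iff_modEq i j := h.2.1.eq_iff.trans Fin.val_inj.symm
  adj i := by
    convert h.2.2 (Fin.ofNat q i) using 2
    ext
    simp [DiCycle.next, Nat.add_mod]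

def TWalk.along (w : ℕ → V) (τ : ℕ → ℕ) (a m : ℕ) : TWalk V :=
  ⟨m, fun i => w (a + i), fun i => τ (a + i)⟩

lemma TWalk.arcs_along (w : ℕ → V) (τ : ℕ → ℕ) (a m : ℕ) :
    (TWalk.along w τ a m).arcs = (fun i => (w i, w (i + 1))) '' Set.Ico a (a + m) := by
  ext p
  simp only [TWalk.arcs, TWalk.along, Fin.val_castSucc, Fin.val_succ, Set.mem_ofPred_eq,
    Set.mem_image, Set.mem_Ico]
  constructor
  · rintro ⟨i, rfl⟩
    exact ⟨a + i, ⟨by omega, by omega⟩, rfl⟩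
  · rintro ⟨n, ⟨h₁, h₂⟩, rfl⟩
    exact ⟨⟨n - a, by omega⟩, by
      simp only [show a + (n - a) = n by omega, show a + (n - a + 1) = n + 1 by omega]⟩

namespace IsCycleEnum

variable {q : ℕ} {w : ℕ → V}

lemma periodic (hw : IsCycleEnum D q w) : Periodic w q :=
  fun _ => (hw.eq_iff_modEq _ _).2 Nat.add_modEq_right

lemma arcs_ofSeq (hw : IsCycleEnum D q w) :
    (DiCycle.ofSeq q w).arcs = Set.range fun i => (w i, w (i + 1)) := by
  ext p
  simp only [DiCycle.arcs, DiCycle.ofSeq, DiCycle.next, Set.mem_ofPred_eq, Set.mem_range]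
  constructor
  · rintro ⟨i, rfl⟩
    exact ⟨i, by rw [hw.periodic.map_mod_nat]⟩
  · rintro ⟨n, rfl⟩
    refine ⟨⟨n % q, Nat.mod_lt _ (by have := hw.two_le; omega)⟩, ?_⟩
    simp only [hw.periodic.map_mod_nat, Nat.mod_add_mod]

variable {τ : ℕ → ℕ}

lemma isPath_along (hw : IsCycleEnum D q w) (hτ : ∀ i, τ i ∈ lam (w i) (w (i + 1)))
    {a m : ℕ} (hm : 1 ≤ m) (hmq : m < q) (hmono : MonotoneOn τ (Set.Ico a (a + m))) :
    (TWalk.along w τ a m).IsPath D lam (w a) (w (a + m)) := by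
  refine ⟨⟨hm, fun i => ?_, fun i j hij => hmono ?_ ?_ (by simpa using hij)⟩, rfl, rfl,
    fun i j hij => Fin.ext ?_⟩
  · simpa only [TWalk.along, Fin.val_castSucc, Fin.val_succ, ← add_assoc] using
      ⟨hw.adj (a + i), hτ (a + i)⟩
  · exact ⟨by omega, Nat.add_lt_add_left i.2 a⟩
  · exact ⟨by omega, Nat.add_lt_add_left j.2 a⟩
  · exact (Nat.ModEq.add_left_cancel' a ((hw.eq_iff_modEq _ _).1 hij)).eq_of_lt_of_lt
      (by omega) (by omega)

lemma isWeakCycle_ofSeq (hw : IsCycleEnum D q w) (hτ : ∀ i, τ i ∈ lam (w i) (w (i + 1)))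
    {a m : ℕ} (hm : 1 ≤ m) (hmq : m < q) (h₁ : MonotoneOn τ (Set.Ico a (a + m)))
    (h₂ : MonotoneOn τ (Set.Ico (a + m) (a + q))) : IsWeakCycle D lam (DiCycle.ofSeq q w) := by
  have hq : 0 < q := by omega
  have mem_vertices : ∀ i, w i ∈ (DiCycle.ofSeq q w).vertices :=
    fun i => ⟨⟨i % q, Nat.mod_lt _ hq⟩, hw.periodic.map_mod_nat i⟩
  have hP' := hw.isPath_along hτ (a := a + m) (m := q - m) (by omega) (by omega)
    (by rwa [show a + m + (q - m) = a + q by omega])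
  rw [show a + m + (q - m) = a + q by omega, hw.periodic a] at hP'
  refine ⟨w a, mem_vertices a, w (a + m), mem_vertices (a + m), fun h => ?_, _, _,
    hw.isPath_along hτ hm hmq h₁, hP', ?_⟩
  · have := (Nat.ModEq.add_left_cancel' a ((hw.eq_iff_modEq (a + 0) (a + m)).1 h))
    have := this.eq_of_lt_of_lt hq hmq
    omega
  · rw [TWalk.arcs_along, TWalk.arcs_along, ← Set.image_union,
      show a + m + (q - m) = a + q by omega, Set.Ico_union_Ico_eq_Ico (by omega) (by omega),
      hw.arcs_ofSeq]
    refine (Set.image_subset_range _ _).antisymm ?_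
    rintro _ ⟨n, rfl⟩
    obtain ⟨k, hk, hkn⟩ := Nat.exists_modEq_mem_Ico hq a n
    refine ⟨k, hk, ?_⟩
    simp only [(hw.eq_iff_modEq _ _).2 hkn, (hw.eq_iff_modEq _ _).2 (hkn.add_right 1)]

lemma exists_mem_descents_ne (hw : IsCycleEnum D q w) (hτ : ∀ i, τ i ∈ lam (w i) (w (i + 1)))
    (hper : Periodic τ q) (hnw : ¬ IsWeakCycle D lam (DiCycle.ofSeq q w))
    {c₁ c₂ : ℕ} (hc₁ : c₁ < q) (hc₂ : c₂ < q) (hne : c₁ ≠ c₂) :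
    ∃ i ∈ descents q τ, i ≠ c₁ ∧ i ≠ c₂ := by
  wlog hlt : c₁ < c₂ generalizing c₁ c₂
  · obtain ⟨i, hi, h₁, h₂⟩ := this hc₂ hc₁ hne.symm (by omega)
    exact ⟨i, hi, h₂, h₁⟩
  by_contra! hcut
  -- cutting after `c₁` and `c₂` leaves two descent-free runs, i.e. two temporal paths
  have hmono : ∀ i, c₂ < i → i < c₂ + q → i ≠ c₁ + q → τ i ≤ τ (i + 1) := by
    intro i h₁ h₂ h₃
    have hmod : i % q ≠ c₁ ∧ i % q ≠ c₂ := by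
      rcases lt_or_ge i q with h | h
      · rw [Nat.mod_eq_of_lt h]
        omega
      · rw [Nat.mod_eq_sub_mod h, Nat.mod_eq_of_lt (by omega)]
        omega
    by_contra! hdesc
    refine hmod.2 (hcut _ (mem_filter.2 ⟨mem_range.2 (Nat.mod_lt _ (by omega)), ?_⟩) hmod.1)
    rwa [hper.map_mod_nat, ← hper.map_mod_nat (i % q + 1), Nat.mod_add_mod, hper.map_mod_nat]
  refine hnw (hw.isWeakCycle_ofSeq hτ (a := c₂ + 1) (m := c₁ + q - c₂) (by omega) (by omega)
    ?_ ?_)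
    <;> refine monotoneOn_of_le_add_one Set.ordConnected_Ico fun i _ hi hi' => hmono i ?_ ?_ ?_
    <;> simp only [Set.mem_Ico] at hi hi' <;> omega

variable {σ : V → V → ℕ}

lemma periodic_times (hw : IsCycleEnum D q w) (σ : V → V → ℕ) :
    Periodic (fun i => σ (w i) (w (i + 1))) q := by
  intro i
  simp only [add_right_comm i q 1, hw.periodic _]

lemma times_eq_one_or_two (hw : IsCycleEnum D q w) (hσ : ∀ u v, D u v → σ u v ∈ lam u v)
    (h12 : ∀ u v, lam u v ⊆ {1, 2}) (i : ℕ) :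
    σ (w i) (w (i + 1)) = 1 ∨ σ (w i) (w (i + 1)) = 2 := by
  simpa using h12 _ _ (hσ _ _ (hw.adj i))

lemma three_le_card_descents (hw : IsCycleEnum D q w)
    (hnw : ¬ IsWeakCycle D lam (DiCycle.ofSeq q w)) (hσ : ∀ u v, D u v → σ u v ∈ lam u v) :
    3 ≤ #(descents q fun i => σ (w i) (w (i + 1))) :=
  three_le_card_descents_of_exists_ne hw.two_le fun _ _ h₁ h₂ hne =>
    hw.exists_mem_descents_ne (fun i => hσ _ _ (hw.adj i)) (hw.periodic_times σ) hnw h₁ h₂ hne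

lemma six_le (hw : IsCycleEnum D q w) (hnw : ¬ IsWeakCycle D lam (DiCycle.ofSeq q w))
    (hσ : ∀ u v, D u v → σ u v ∈ lam u v) (h12 : ∀ u v, lam u v ⊆ {1, 2}) : 6 ≤ q := by
  have := hw.three_le_card_descents hnw hσ
  have := two_mul_card_descents_le (by have := hw.two_le; omega) (hw.periodic_times σ)
    (hw.times_eq_one_or_two hσ h12)
  omega

lemma times_add_one_ne (hw : IsCycleEnum D 6 w) (hnw : ¬ IsWeakCycle D lam (DiCycle.ofSeq 6 w))
    (hσ : ∀ u v, D u v → σ u v ∈ lam u v) (h12 : ∀ u v, lam u v ⊆ {1, 2}) {i : ℕ} (hi : i < 6) :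
    σ (w (i + 1)) (w (i + 1 + 1)) ≠ σ (w i) (w (i + 1)) := fun h => by
  have := hw.three_le_card_descents hnw hσ
  have := two_mul_card_descents_lt (hw.periodic_times σ) (hw.times_eq_one_or_two hσ h12) hi h
  omega

lemma lam_eq_singleton (hw : IsCycleEnum D 6 w)
    (hnw : ¬ IsWeakCycle D lam (DiCycle.ofSeq 6 w)) (hσ : ∀ u v, D u v → σ u v ∈ lam u v)
    (h12 : ∀ u v, lam u v ⊆ {1, 2}) {i : ℕ} (hi : i < 6) :
    lam (w i) (w (i + 1)) = {σ (w i) (w (i + 1))} := by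
  classical
  refine eq_singleton_iff_unique_mem.2 ⟨hσ _ _ (hw.adj i), fun s hs => ?_⟩
  -- retiming the `i`-th arc to `s` must preserve the alternation of the times
  let σ' : V → V → ℕ := fun u v => if u = w i ∧ v = w (i + 1) then s else σ u v
  have hσ' : ∀ u v, D u v → σ' u v ∈ lam u v := by
    intro u v huv
    dsimp only [σ']
    split_ifs with h
    · rwa [h.1, h.2]
    · exact hσ u v huv
  have hwi : w (i + 1) ≠ w i := fun h => by
    have := (hw.eq_iff_modEq _ _).1 h
    unfold Nat.ModEq at this
    omega
  have h₁ := hw.times_add_one_ne hnw hσ h12 hi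
  have h₂ := hw.times_add_one_ne hnw hσ' h12 hi
  simp only [σ', hwi, false_and, if_false, and_self, if_true] at h₂
  have := hw.times_eq_one_or_two hσ h12 i
  have := hw.times_eq_one_or_two hσ h12 (i + 1)
  have : s = 1 ∨ s = 2 := by simpa using h12 _ _ hs
  omega

end IsCycleEnum

theorem lifetime_two_no_weakCycle_general (V : Type*) (D : V → V → Prop)
    (lam : V → V → Finset ℕ)
    (hne : ∀ u w, D u w → (lam u w).Nonempty)
    (htau : ∀ u w, lam u w ⊆ {1, 2})
    (hnw : ¬ ∃ C : DiCycle V, C.IsCycle D ∧ IsWeakCycle D lam C) :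
    (∀ C : DiCycle V, C.IsCycle D → 6 ≤ C.q) ∧
    ∀ a b c d e f : V, [a, b, c, d, e, f].Pairwise (· ≠ ·) →
      D a b → D b c → D c d → D d e → D e f → D f a →
        (lam a b).card = 1 ∧ (lam b c).card = 1 ∧ (lam c d).card = 1 ∧
        (lam d e).card = 1 ∧ (lam e f).card = 1 ∧ (lam f a).card = 1 ∧
        lam a b = lam c d ∧ lam c d = lam e f ∧
        lam b c = lam d e ∧ lam d e = lam f a ∧
        lam a b ≠ lam b c := by
  obtain ⟨σ, hσ⟩ := exists_time_selection hne
  have no_weak : ∀ {q : ℕ} [NeZero q] {v : Fin q → V}, (DiCycle.mk q v).IsCycle D →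
      ¬ IsWeakCycle D lam (DiCycle.ofSeq q fun n => v (Fin.ofNat q n)) :=
    fun hC h => hnw ⟨_, hC, by rwa [DiCycle.ofSeq_ofNat] at h⟩
  refine ⟨fun ⟨q, v⟩ hC => ?_, fun a b c d e f hpair hab hbc hcd hde hef hfa => ?_⟩
  · have : NeZero q := ⟨(zero_lt_two.trans_le hC.1).ne'⟩
    exact hC.isCycleEnum.six_le (no_weak hC) hσ htau
  have hC : (DiCycle.mk 6 ![a, b, c, d, e, f]).IsCycle D :=
    ⟨by norm_num, List.nodup_ofFn.1 (by simpa using hpair), by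
      intro i; fin_cases i <;> simpa [DiCycle.next]⟩
  have hw := hC.isCycleEnum
  have hsingle := fun i (hi : i < 6) => hw.lam_eq_singleton (no_weak hC) hσ htau hi
  have halt := fun i (hi : i < 6) => hw.times_add_one_ne (no_weak hC) hσ htau hi
  have h12 := fun i (_ : i < 6) => hw.times_eq_one_or_two hσ htau i
  simp only [Nat.forall_lt_succ_right, Nat.not_lt_zero, IsEmpty.forall_iff, implies_true,
    true_and, Fin.ofNat, Nat.reduceAdd, Nat.reduceMod, Fin.zero_eta, Fin.mk_one, Fin.reduceFinMk,
    Matrix.cons_val_zero, Matrix.cons_val_one, Matrix.cons_val] at hsingle halt h12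
  simp only [hsingle, card_singleton, ne_eq, singleton_inj, true_and]
  omega

/-- Let `(D, lam)` be a temporal digraph with lifetime 2. If
`(D, lam)` contains no weak-cycle, then (a) `D` has no cycle on fewer than 6
vertices, and (b) on every 6-cycle `(a, b, c, d, e, f)` all six time sets are
singletons and `lam(e₁) = lam(e₃) = lam(e₅) ≠ lam(e₂) = lam(e₄) = lam(e₆)`. -/
theorem lifetime_two_no_weakCycle (V : Type*) [Fintype V] (D : V → V → Prop)
    (lam : V → V → Finset ℕ) (hloop : ∀ u, ¬ D u u)
    (hne : ∀ u w, D u w → (lam u w).Nonempty)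
    (htau : ∀ u w, lam u w ⊆ {1, 2})
    (hnw : ¬ ∃ C : DiCycle V, C.IsCycle D ∧ IsWeakCycle D lam C) :
    (∀ C : DiCycle V, C.IsCycle D → 6 ≤ C.q) ∧
    ∀ a b c d e f : V, [a, b, c, d, e, f].Pairwise (· ≠ ·) →
      D a b → D b c → D c d → D d e → D e f → D f a →
        (lam a b).card = 1 ∧ (lam b c).card = 1 ∧ (lam c d).card = 1 ∧
        (lam d e).card = 1 ∧ (lam e f).card = 1 ∧ (lam f a).card = 1 ∧
        lam a b = lam c d ∧ lam c d = lam e f ∧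
        lam b c = lam d e ∧ lam d e = lam f a ∧
        lam a b ≠ lam b c :=
  lifetime_two_no_weakCycle_general V D lam hne htau hnw
end
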